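/- arXiv:1905.01670 — 7 statements merged into one kernel-verified Lean document; each statement's English description precedes it below -/
import Mathlib

section
/- Let G = (V,E;w) be a finite simple undirected graph with positive vertex weights and no isolated vertices. Then G has a maximal bottleneck and it is unique: there is exactly one nonempty set B ⊆ V with α(B) = α* such that α(B') > α(B) for every set B' with B ⊊ B' ⊆ V. -/
open Finset

/-- The total weight of a finite set of vertices. -/
def wsum {V : Type*} (w : V → ℝ) (S : Finset V) : ℝ := ∑ v ∈ S, w v

/-- The neighborhood `Γ(S)` of a set `S` of vertices: all vertices adjacent to at least one
vertex of `S`. -/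
def nbhd {V : Type*} [Fintype V] [DecidableEq V] (G : SimpleGraph V) [DecidableRel G.Adj]
    (S : Finset V) : Finset V :=
  univ.filter fun v => ∃ u ∈ S, G.Adj u v

/-- The α-ratio `α(S) = w(Γ(S)) / w(S)` of a set `S`. -/
noncomputable def alphaR {V : Type*} [Fintype V] [DecidableEq V] (G : SimpleGraph V)
    [DecidableRel G.Adj] (w : V → ℝ) (S : Finset V) : ℝ :=
  wsum w (nbhd G S) / wsum w S

/-- `B` is a maximal bottleneck: it is nonempty, its α-ratio is minimal among all nonempty
subsets (i.e. `α(B) = α*`), and every strictly larger subset has strictly larger α-ratio. -/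
def IsMaxBottleneck {V : Type*} [Fintype V] [DecidableEq V] (G : SimpleGraph V)
    [DecidableRel G.Adj] (w : V → ℝ) (B : Finset V) : Prop :=
  B.Nonempty ∧ (∀ S : Finset V, S.Nonempty → alphaR G w B ≤ alphaR G w S) ∧
    ∀ B' : Finset V, B ⊂ B' → alphaR G w B < alphaR G w B'

section Aux

variable {V : Type*} [Fintype V] [DecidableEq V] (G : SimpleGraph V) [DecidableRel G.Adj]
  (w : V → ℝ)

lemma wsum_nonneg' (hw : ∀ v, 0 < w v) (S : Finset V) : 0 ≤ wsum w S :=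
  Finset.sum_nonneg fun v _ => (hw v).le

lemma wsum_pos' (hw : ∀ v, 0 < w v) {S : Finset V} (hS : S.Nonempty) : 0 < wsum w S :=
  Finset.sum_pos (fun v _ => hw v) hS

lemma wsum_mono' (hw : ∀ v, 0 < w v) {S T : Finset V} (h : S ⊆ T) : wsum w S ≤ wsum w T :=
  Finset.sum_le_sum_of_subset_of_nonneg h (fun v _ _ => (hw v).le)

lemma nbhd_union' (A B : Finset V) : nbhd G (A ∪ B) = nbhd G A ∪ nbhd G B := by
  ext v
  simp only [nbhd, mem_filter, mem_univ, true_and, mem_union]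
  constructor
  · rintro ⟨u, hu | hu, hadj⟩
    · exact Or.inl ⟨u, hu, hadj⟩
    · exact Or.inr ⟨u, hu, hadj⟩
  · rintro (⟨u, hu, hadj⟩ | ⟨u, hu, hadj⟩)
    · exact ⟨u, Or.inl hu, hadj⟩
    · exact ⟨u, Or.inr hu, hadj⟩

lemma nbhd_inter_subset' (A B : Finset V) : nbhd G (A ∩ B) ⊆ nbhd G A ∩ nbhd G B := by
  intro v hv
  simp only [nbhd, mem_filter, mem_univ, true_and, mem_inter] at hv ⊢
  obtain ⟨u, ⟨hu1, hu2⟩, hadj⟩ := hv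
  exact ⟨⟨u, hu1, hadj⟩, ⟨u, hu2, hadj⟩⟩

lemma wgamma_eq (hw : ∀ v, 0 < w v) {S : Finset V} (hS : S.Nonempty) :
    wsum w (nbhd G S) = alphaR G w S * wsum w S := by
  rw [alphaR, div_mul_cancel₀]
  exact (wsum_pos' w hw hS).ne'

/-- `S` is a global minimizer of the α-ratio. -/
def IsMinz (S : Finset V) : Prop :=
  S.Nonempty ∧ ∀ T : Finset V, T.Nonempty → alphaR G w S ≤ alphaR G w T

lemma minz_union (hw : ∀ v, 0 < w v) {A B : Finset V} (hA : IsMinz G w A) (hB : IsMinz G w B) :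
    IsMinz G w (A ∪ B) := by
  obtain ⟨a, ha⟩ := hA.1
  have hABne : (A ∪ B).Nonempty := ⟨a, mem_union_left _ ha⟩
  set m := alphaR G w A with hm
  have hBm : alphaR G w B = m := le_antisymm (hB.2 A hA.1) (hA.2 B hB.1)
  -- inclusion-exclusion
  have hie : wsum w (nbhd G (A ∪ B)) + wsum w (nbhd G A ∩ nbhd G B)
      = wsum w (nbhd G A) + wsum w (nbhd G B) := by
    rw [nbhd_union']
    exact Finset.sum_union_inter
  have hie2 : wsum w (A ∪ B) + wsum w (A ∩ B) = wsum w A + wsum w B :=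
    Finset.sum_union_inter
  have h2 : m * wsum w (A ∩ B) ≤ wsum w (nbhd G (A ∩ B)) := by
    by_cases h : (A ∩ B).Nonempty
    · rw [wgamma_eq G w hw h]
      exact mul_le_mul_of_nonneg_right (hA.2 _ h) (wsum_nonneg' w hw _)
    · rw [not_nonempty_iff_eq_empty] at h
      rw [h]
      have : nbhd G (∅ : Finset V) = ∅ := by simp [nbhd]
      simp [this, wsum]
  have h3 : wsum w (nbhd G (A ∩ B)) ≤ wsum w (nbhd G A ∩ nbhd G B) :=
    wsum_mono' w hw (nbhd_inter_subset' G A B)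
  have key : wsum w (nbhd G (A ∪ B)) ≤ m * wsum w (A ∪ B) := by
    have hA' : wsum w (nbhd G A) = m * wsum w A := wgamma_eq G w hw hA.1
    have hB' : wsum w (nbhd G B) = m * wsum w B := by
      rw [wgamma_eq G w hw hB.1, hBm]
    have hm2 : m * (wsum w (A ∪ B) + wsum w (A ∩ B)) = m * (wsum w A + wsum w B) := by
      rw [hie2]
    ring_nf at hm2 ⊢
    nlinarith [h2, h3, hie, hm2]
  have hle : alphaR G w (A ∪ B) ≤ m := by
    rw [alphaR, div_le_iff₀ (wsum_pos' w hw hABne)]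
    exact key
  exact ⟨hABne, fun T hT => hle.trans (hA.2 T hT)⟩

end Aux

/-- a finite graph with positive vertex weights and no isolated vertices has a
unique maximal bottleneck. -/
theorem exists_unique_maximal_bottleneck {V : Type*} [Fintype V] [DecidableEq V] [Nonempty V]
    (G : SimpleGraph V) [DecidableRel G.Adj] (w : V → ℝ)
    (hw : ∀ v, 0 < w v) (hiso : ∀ v : V, ∃ u, G.Adj v u) :
    ∃! B : Finset V, IsMaxBottleneck G w B := by
  classical
  -- a minimizer exists
  obtain ⟨A, hAmem, hAmin⟩ := Finset.exists_min_image
    ((univ : Finset V).powerset.filter (·.Nonempty)) (alphaR G w)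
    ⟨{Classical.arbitrary V}, by simp⟩
  have hAminz : IsMinz G w A :=
    ⟨(mem_filter.1 hAmem).2, fun T hT => hAmin T (by simp [hT])⟩
  -- the union of all minimizers
  set 𝒮 := (univ : Finset V).powerset.filter (fun S => IsMinz G w S) with h𝒮
  set Bs := 𝒮.sup id with hBs
  have hmemS : ∀ S : Finset V, IsMinz G w S → S ∈ 𝒮 := fun S hS => by
    simp [h𝒮, hS]
  have hsubBs : ∀ S : Finset V, IsMinz G w S → S ⊆ Bs := fun S hS =>
    Finset.le_sup (f := id) (hmemS S hS)
  have hQ : Bs = ∅ ∨ IsMinz G w Bs := by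
    refine Finset.sup_induction (p := fun S => S = ∅ ∨ IsMinz G w S) (Or.inl rfl) ?_ ?_
    · rintro a (rfl | ha) b (rfl | hb)
      · exact Or.inl rfl
      · exact Or.inr (by simpa using hb)
      · exact Or.inr (by simpa using ha)
      · exact Or.inr (minz_union G w hw ha hb)
    · intro S hS
      exact Or.inr (mem_filter.1 hS).2
  have hBsminz : IsMinz G w Bs := by
    rcases hQ with h | h
    · exfalso
      obtain ⟨a, ha⟩ := hAminz.1
      exact absurd (hsubBs A hAminz ha) (by simp [h])
    · exact h
  have hmax : ∀ B' : Finset V, Bs ⊂ B' → alphaR G w Bs < alphaR G w B' := by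
    intro B' hB'
    have hB'ne : B'.Nonempty := hBsminz.1.mono hB'.subset
    have hle : alphaR G w Bs ≤ alphaR G w B' := hBsminz.2 B' hB'ne
    rcases lt_or_eq_of_le hle with h | h
    · exact h
    · exfalso
      have : IsMinz G w B' := ⟨hB'ne, fun T hT => h ▸ hBsminz.2 T hT⟩
      exact hB'.not_subset (hsubBs B' this)
  refine ⟨Bs, ⟨hBsminz.1, hBsminz.2, hmax⟩, ?_⟩
  intro B hB
  have hBminz : IsMinz G w B := ⟨hB.1, hB.2.1⟩
  have hsub : B ⊆ Bs := hsubBs B hBminz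
  by_contra hne
  have hss : B ⊂ Bs := hsub.ssubset_of_ne hne
  have h1 : alphaR G w B < alphaR G w Bs := hB.2.2 Bs hss
  have h2 : alphaR G w Bs ≤ alphaR G w B := hBsminz.2 B hB.1
  linarith
end

section
/- Let G = (V,E;w) be a finite simple undirected graph with positive vertex weights and no isolated vertices, let B be its maximal bottleneck and C = Γ(B). Then the induced subgraph G[V ∖ (B ∪ C)] has no isolated vertices; that is, every vertex x ∈ V ∖ (B ∪ C) has a neighbor in V ∖ (B ∪ C). -/
open Finset

/-- if `B` is the maximal bottleneck of a graph with positive weights and no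
isolated vertices, and `C = Γ(B)`, then the induced subgraph on `V ∖ (B ∪ C)` has no
isolated vertices. -/
theorem no_isolated_vertex_after_removal {V : Type*} [Fintype V] [DecidableEq V]
    (G : SimpleGraph V) [DecidableRel G.Adj] (w : V → ℝ)
    (hw : ∀ v, 0 < w v) (hiso : ∀ v : V, ∃ u, G.Adj v u)
    (B C : Finset V) (hB : IsMaxBottleneck G w B) (hC : C = nbhd G B) :
    ∀ x ∈ univ \ (B ∪ C), ∃ y ∈ univ \ (B ∪ C), G.Adj x y := by
  intro x hx
  simp only [mem_sdiff, mem_union, mem_univ, true_and, not_or] at hx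
  obtain ⟨hxB, hxC⟩ := hx
  by_contra h
  push_neg at h
  have hnbC : ∀ y, G.Adj x y → y ∈ C := by
    intro y hy
    by_contra hyC
    have hyB : y ∉ B := by
      intro hyB
      exact hxC (by rw [hC]; exact mem_filter.2 ⟨mem_univ _, y, hyB, hy.symm⟩)
    exact h y (by simp [hyB, hyC]) hy
  have hsub : nbhd G (insert x B) = nbhd G B := by
    ext v
    simp only [nbhd, mem_filter, mem_univ, true_and, mem_insert]
    constructor
    · rintro ⟨u, (rfl | hu), hadj⟩
      · have := hnbC v hadj
        rw [hC] at this
        simpa [nbhd] using this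
      · exact ⟨u, hu, hadj⟩
    · rintro ⟨u, hu, hadj⟩; exact ⟨u, Or.inr hu, hadj⟩
  obtain ⟨hBne, hmin, hmax⟩ := hB
  have hlt := hmax (insert x B) (Finset.ssubset_insert hxB)
  have hwB : 0 < wsum w B := Finset.sum_pos (fun v _ => hw v) hBne
  have hwB' : wsum w (insert x B) = w x + wsum w B := Finset.sum_insert hxB
  have hNpos : 0 < wsum w (nbhd G B) := by
    obtain ⟨b, hb⟩ := hBne
    obtain ⟨u, hu⟩ := hiso b
    have : u ∈ nbhd G B := mem_filter.2 ⟨mem_univ _, b, hb, hu⟩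
    exact Finset.sum_pos' (fun v _ => (hw v).le) ⟨u, this, hw u⟩
  rw [alphaR, alphaR, hsub, hwB'] at hlt
  have hle : wsum w (nbhd G B) / (w x + wsum w B) ≤ wsum w (nbhd G B) / wsum w B := by
    apply div_le_div_of_nonneg_left hNpos.le hwB
    linarith [hw x]
  linarith
end

section
/- Let G = (V,E;w) be a finite simple undirected graph with positive vertex weights and let α ≥ 0. In the network N(G,α): (i) for every B ⊆ V, the s–t cut whose source side is S = {s} ∪ B ∪ {ũ : u ∈ Γ(B)} has finite capacity equal to α·(w(V) − w(B)) + w(Γ(B)); (ii) every s–t cut (S,T) of finite capacity satisfies {ũ : u ∈ Γ(S ∩ V)} ⊆ S and cap(S,T) ≥ α·(w(V) − w(S∩V)) + w(Γ(S∩V)). Consequently, the minimum s–t cut capacity of N(G,α) equals the minimum over B ⊆ V of α·(w(V) − w(B)) + w(Γ(B)). -/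
open Finset
open scoped ENNReal

/-- The vertex set of the network `N(G,α)`: the source `Sum.inl none`, the sink
`Sum.inr none`, a left copy `Sum.inl (some v)` of each vertex `v ∈ V`, and a right copy
`Sum.inr (some v)` (written `ṽ`) of each vertex `v ∈ V`. -/
abbrev NetV (V : Type*) := Option V ⊕ Option V

/-- The source `s` of the network `N(G,α)`. -/
def netSrc (V : Type*) : NetV V := Sum.inl none

/-- The sink `t` of the network `N(G,α)`. -/
def netSnk (V : Type*) : NetV V := Sum.inr none

/-- Edge capacities of the network `N(G,α)`: `(s, v)` has capacity `α·w(v)`, `(ṽ, t)` has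
capacity `w(v)`, and `(u, ṽ)` has capacity `+∞` whenever `(u,v) ∈ E`; all other pairs have
capacity `0` (no edge). -/
noncomputable def netCap {V : Type*} (G : SimpleGraph V) [DecidableRel G.Adj]
    (w : V → ℝ) (a : ℝ) : NetV V → NetV V → ℝ≥0∞
  | Sum.inl none, Sum.inl (some v) => ENNReal.ofReal (a * w v)
  | Sum.inr (some v), Sum.inr none => ENNReal.ofReal (w v)
  | Sum.inl (some u), Sum.inr (some v) => if G.Adj u v then ⊤ else 0
  | _, _ => 0

/-- The capacity of the s–t cut `(S, Sᶜ)`: the sum of the capacities of all directed edges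
with tail in `S` and head outside `S`. -/
noncomputable def cutCap {V : Type*} [Fintype V] [DecidableEq V] (G : SimpleGraph V)
    [DecidableRel G.Adj] (w : V → ℝ) (a : ℝ) (S : Finset (NetV V)) : ℝ≥0∞ :=
  ∑ x ∈ S, ∑ y ∈ Sᶜ, netCap G w a x y

/-- The source side `{s} ∪ B ∪ {ũ : u ∈ Γ(B)}` of the cut corresponding to `B ⊆ V`. -/
def cutSide {V : Type*} [Fintype V] [DecidableEq V] (G : SimpleGraph V)
    [DecidableRel G.Adj] (B : Finset V) : Finset (NetV V) :=
  {netSrc V} ∪ B.image (fun v => Sum.inl (some v)) ∪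
    (nbhd G B).image (fun v => Sum.inr (some v))

/-- The set `S ∩ V` of left-copy vertices of a cut side `S`: the corresponding set of the
cut. -/
def leftPart {V : Type*} [Fintype V] [DecidableEq V] (S : Finset (NetV V)) : Finset V :=
  univ.filter fun v => Sum.inl (some v) ∈ S

/-!
A cut of finite capacity cannot separate `u` from `ṽ` when `(u,v) ∈ E`, since that edge has
capacity `∞`; so its right part contains `Γ(B)~` for `B = S ∩ V`. Its capacity is then
`α·w(v)` summed over the `v ∉ B` plus `w(v)` summed over the right vertices in `S`, which is at
least `α·(w(V) − w(B)) + w(Γ(B))`, with equality for the cut `{s} ∪ B ∪ Γ(B)~`.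
-/

section NetworkCut

variable {V : Type*} [Fintype V] [DecidableEq V] {G : SimpleGraph V} [DecidableRel G.Adj]
  {w : V → ℝ} {a : ℝ}

def rightPart (S : Finset (NetV V)) : Finset V :=
  univ.filter fun v => Sum.inr (some v) ∈ S

lemma cutCap_eq_sum (S : Finset (NetV V)) (hs : netSrc V ∈ S) (ht : netSnk V ∉ S) :
    cutCap G w a S =
      ∑ v ∈ (leftPart S)ᶜ, ENNReal.ofReal (a * w v) +
        ∑ v ∈ rightPart S, ENNReal.ofReal (w v) +
        ∑ u ∈ leftPart S, ∑ v ∈ (rightPart S)ᶜ, (if G.Adj u v then ∞ else 0) := by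
  have sum_eq_univ (T : Finset (NetV V)) (f : NetV V → ℝ≥0∞) :
      ∑ y ∈ T, f y = ∑ y, if y ∈ T then f y else 0 := by
    rw [sum_ite_mem, univ_inter]
  simp only [cutCap, sum_eq_univ S, sum_eq_univ Sᶜ, mem_compl, leftPart, rightPart, compl_filter,
    sum_filter, Fintype.sum_sum_type, Fintype.sum_option, netCap]
  simp only [netSrc, netSnk] at hs ht
  simp [hs, ht, add_right_comm]

lemma sum_adj_top_eq_zero {B R : Finset V} (h : nbhd G B ⊆ R) :
    ∑ u ∈ B, ∑ v ∈ Rᶜ, (if G.Adj u v then ∞ else 0) = 0 :=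
  sum_eq_zero fun u hu => sum_eq_zero fun v hv =>
    if_neg fun huv => mem_compl.mp hv (h (mem_filter.mpr ⟨mem_univ v, u, hu, huv⟩))

lemma nbhd_leftPart_subset_rightPart {S : Finset (NetV V)} (hS : cutCap G w a S ≠ ∞) :
    nbhd G (leftPart S) ⊆ rightPart S := by
  intro v hv
  obtain ⟨-, u, hu, huv⟩ := mem_filter.mp hv
  refine mem_filter.mpr ⟨mem_univ v, ?_⟩
  by_contra hvS
  have hedge : netCap G w a (Sum.inl (some u)) (Sum.inr (some v)) = ∞ := if_pos huv
  refine hS (top_le_iff.mp (hedge ▸ ?_))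
  calc netCap G w a (Sum.inl (some u)) (Sum.inr (some v))
      ≤ ∑ y ∈ Sᶜ, netCap G w a (Sum.inl (some u)) y :=
        single_le_sum (fun _ _ => zero_le) (mem_compl.mpr hvS)
    _ ≤ cutCap G w a S :=
        single_le_sum (f := fun x => ∑ y ∈ Sᶜ, netCap G w a x y) (fun _ _ => zero_le)
          (mem_filter.mp hu).2

lemma netSrc_mem_cutSide (B : Finset V) : netSrc V ∈ cutSide G B := by
  simp [cutSide]

lemma netSnk_not_mem_cutSide (B : Finset V) : netSnk V ∉ cutSide G B := by
  simp [cutSide, netSnk, netSrc]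

lemma leftPart_cutSide (B : Finset V) : leftPart (cutSide G B) = B := by
  ext v
  simp [leftPart, cutSide, netSrc]

lemma rightPart_cutSide (B : Finset V) : rightPart (cutSide G B) = nbhd G B := by
  ext v
  simp [rightPart, cutSide, netSrc]

lemma ofReal_cost_eq_sum (hw : ∀ v, 0 ≤ w v) (ha : 0 ≤ a) (B N : Finset V) :
    ENNReal.ofReal (a * (wsum w univ - wsum w B) + wsum w N) =
      ∑ v ∈ Bᶜ, ENNReal.ofReal (a * w v) + ∑ v ∈ N, ENNReal.ofReal (w v) := by
  have hB : wsum w univ - wsum w B = ∑ v ∈ Bᶜ, w v := by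
    rw [wsum, wsum, ← sum_compl_add_sum B w]
    ring
  rw [hB, mul_sum, wsum,
    ENNReal.ofReal_add (sum_nonneg fun v _ => mul_nonneg ha (hw v)) (sum_nonneg fun v _ => hw v),
    ENNReal.ofReal_sum_of_nonneg fun v _ => mul_nonneg ha (hw v),
    ENNReal.ofReal_sum_of_nonneg fun v _ => hw v]

lemma cutCap_cutSide (hw : ∀ v, 0 ≤ w v) (ha : 0 ≤ a) (B : Finset V) :
    cutCap G w a (cutSide G B) =
      ENNReal.ofReal (a * (wsum w univ - wsum w B) + wsum w (nbhd G B)) := by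
  rw [cutCap_eq_sum _ (netSrc_mem_cutSide B) (netSnk_not_mem_cutSide B), leftPart_cutSide,
    rightPart_cutSide, sum_adj_top_eq_zero subset_rfl, add_zero, ofReal_cost_eq_sum hw ha]

lemma ofReal_cost_le_cutCap (hw : ∀ v, 0 ≤ w v) (ha : 0 ≤ a) {S : Finset (NetV V)}
    (hs : netSrc V ∈ S) (ht : netSnk V ∉ S) :
    ENNReal.ofReal (a * (wsum w univ - wsum w (leftPart S)) + wsum w (nbhd G (leftPart S)))
      ≤ cutCap G w a S := by
  by_cases hS : cutCap G w a S = ∞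
  · exact hS ▸ le_top
  rw [ofReal_cost_eq_sum hw ha, cutCap_eq_sum S hs ht]
  calc _ ≤ ∑ v ∈ (leftPart S)ᶜ, ENNReal.ofReal (a * w v) +
          ∑ v ∈ rightPart S, ENNReal.ofReal (w v) := by
        gcongr
        exact nbhd_leftPart_subset_rightPart hS
    _ ≤ _ := le_self_add

end NetworkCut

/-- (i) for every `B ⊆ V` the cut with source side `{s} ∪ B ∪ Γ(B)~` has
finite capacity `α·(w(V) − w(B)) + w(Γ(B))`; (ii) every finite-capacity s–t cut `(S,T)`
satisfies `Γ(S ∩ V)~ ⊆ S` and has capacity at least `α·(w(V)−w(S∩V)) + w(Γ(S∩V))`;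
consequently the minimum cut capacity of `N(G,α)` equals
`min_{B ⊆ V} α·(w(V)−w(B)) + w(Γ(B))`. -/
theorem network_cut_characterization {V : Type*} [Fintype V] [DecidableEq V]
    (G : SimpleGraph V) [DecidableRel G.Adj] (w : V → ℝ) (a : ℝ)
    (hw : ∀ v, 0 < w v) (ha : 0 ≤ a) :
    (∀ B : Finset V,
        cutCap G w a (cutSide G B) =
          ENNReal.ofReal (a * (wsum w univ - wsum w B) + wsum w (nbhd G B))) ∧
    (∀ S : Finset (NetV V), netSrc V ∈ S → netSnk V ∉ S → cutCap G w a S ≠ ⊤ →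
        (∀ u ∈ nbhd G (leftPart S), (Sum.inr (some u) : NetV V) ∈ S) ∧
        ENNReal.ofReal (a * (wsum w univ - wsum w (leftPart S)) + wsum w (nbhd G (leftPart S)))
          ≤ cutCap G w a S) ∧
    (⨅ S ∈ {S : Finset (NetV V) | netSrc V ∈ S ∧ netSnk V ∉ S}, cutCap G w a S) =
      ⨅ B : Finset V, ENNReal.ofReal (a * (wsum w univ - wsum w B) + wsum w (nbhd G B)) := by
  have hw' : ∀ v, 0 ≤ w v := fun v => (hw v).le
  refine ⟨cutCap_cutSide hw' ha, fun S hs ht hS => ⟨fun u hu =>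
    (mem_filter.mp (nbhd_leftPart_subset_rightPart hS hu)).2, ofReal_cost_le_cutCap hw' ha hs ht⟩,
    le_antisymm ?_ ?_⟩
  · refine le_iInf fun B => ?_
    rw [← cutCap_cutSide hw' ha B]
    exact iInf₂_le _ ⟨netSrc_mem_cutSide B, netSnk_not_mem_cutSide B⟩
  · exact le_iInf₂ fun S hS =>
      (iInf_le _ (leftPart S)).trans (ofReal_cost_le_cutCap hw' ha hS.1 hS.2)
end

section
/- Let G = (V,E;w) be a finite simple undirected graph with positive vertex weights, let α* be its minimal α-ratio, let α ≥ 0, and define cap⁺(G,α) = min over nonempty B ⊆ V of [α·(w(V) − w(B)) + w(Γ(B))]. If a nonempty set B ⊆ V attains this minimum, i.e. α·(w(V) − w(B)) + w(Γ(B)) = cap⁺(G,α), and moreover w(Γ(B))/w(B) = α, then α = α*. -/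
open Finset

/-- if a nonempty `B ⊆ V` attains the minimum
`cap⁺(G,α) = min_{∅ ≠ B ⊆ V} [α·(w(V) − w(B)) + w(Γ(B))]` and moreover
`w(Γ(B))/w(B) = α`, then `α = α*`, the minimal α-ratio of `G`. -/
theorem min_cut_ratio_eq_alphaStar {V : Type*} [Fintype V] [DecidableEq V]
    (G : SimpleGraph V) [DecidableRel G.Adj] (w : V → ℝ) (hw : ∀ v, 0 < w v)
    (a astar capa : ℝ) (ha : 0 ≤ a)
    (hstar : IsLeast {r : ℝ | ∃ S : Finset V, S.Nonempty ∧ r = alphaR G w S} astar)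
    (hcap : IsLeast {c : ℝ | ∃ B : Finset V, B.Nonempty ∧
        c = a * (wsum w univ - wsum w B) + wsum w (nbhd G B)} capa)
    (B : Finset V) (hBne : B.Nonempty)
    (hattain : a * (wsum w univ - wsum w B) + wsum w (nbhd G B) = capa)
    (hratio : wsum w (nbhd G B) / wsum w B = a) :
    a = astar := by
  have hwpos : ∀ S : Finset V, S.Nonempty → 0 < wsum w S := fun S hS =>
    Finset.sum_pos (fun v _ => hw v) hS
  have hwB := hwpos B hBne
  have hΓB : wsum w (nbhd G B) = a * wsum w B := by
    field_simp at hratio; linarith [hratio]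
  have hcapa : capa = a * wsum w univ := by
    rw [← hattain, hΓB]; ring
  -- astar ≤ a
  have h1 : astar ≤ a := by
    have hmem : a ∈ {r : ℝ | ∃ S : Finset V, S.Nonempty ∧ r = alphaR G w S} :=
      ⟨B, hBne, by rw [alphaR, hratio]⟩
    exact hstar.2 hmem
  -- a ≤ astar
  obtain ⟨S, hSne, hSeq⟩ := hstar.1
  have hwS := hwpos S hSne
  have h2 : capa ≤ a * (wsum w univ - wsum w S) + wsum w (nbhd G S) :=
    hcap.2 ⟨S, hSne, rfl⟩
  have h3 : a * wsum w S ≤ wsum w (nbhd G S) := by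
    rw [hcapa] at h2; linarith
  have h4 : a ≤ astar := by
    rw [hSeq, alphaR, le_div_iff₀ hwS]; linarith
  linarith
end

section
/- Let G = (V,E;w) be a finite simple undirected graph with positive vertex weights and no isolated vertices, let B be its maximal bottleneck, C = Γ(B), and α = w(C)/w(B), and assume α < 1 (so that B ∩ C = ∅ and B is independent). Then there exists f : V × V → ℝ with f(u,v) ≥ 0 for all u,v, with f(u,v) = 0 unless u ∈ B, v ∈ C and (u,v) ∈ E, such that Σ_{v∈C} f(u,v) = w(u) for every u ∈ B and Σ_{u∈B} f(u,v) = w(v)/α for every v ∈ C. -/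
open Finset

set_option linter.unusedSectionVars false
section GaleAux
variable {V : Type*} [DecidableEq V]

/-- neighborhood of `S` inside `C` w.r.t. relation `r` -/
def nbIn (r : V → V → Prop) [DecidableRel r] (C S : Finset V) : Finset V :=
  C.filter fun v => ∃ u ∈ S, r u v

variable (r : V → V → Prop) [DecidableRel r]

lemma nbIn_subset (C S : Finset V) : nbIn r C S ⊆ C := filter_subset _ _

lemma mem_nbIn {C S : Finset V} {v : V} : v ∈ nbIn r C S ↔ v ∈ C ∧ ∃ u ∈ S, r u v :=
  mem_filter

lemma nbIn_mono_right {C S T : Finset V} (h : S ⊆ T) : nbIn r C S ⊆ nbIn r C T := by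
  intro v hv
  rcases (mem_nbIn r).1 hv with ⟨hvC, u, hu, hr⟩
  exact (mem_nbIn r).2 ⟨hvC, u, h hu, hr⟩

lemma nbIn_nbIn {C S S₀ : Finset V} (h : S ⊆ S₀) : nbIn r (nbIn r C S₀) S = nbIn r C S := by
  ext v
  simp only [mem_nbIn]
  constructor
  · rintro ⟨⟨hvC, _⟩, h2⟩; exact ⟨hvC, h2⟩
  · rintro ⟨hvC, u, hu, hr⟩; exact ⟨⟨hvC, u, h hu, hr⟩, u, hu, hr⟩

lemma nbIn_sdiff {C C₀ S : Finset V} : nbIn r (C \ C₀) S = nbIn r C S \ C₀ := by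
  ext v
  simp only [mem_nbIn, mem_sdiff]
  tauto

lemma nbIn_erase {C S : Finset V} {v₀ : V} :
    nbIn r (C.erase v₀) S = (nbIn r C S).erase v₀ := by
  ext v
  simp only [mem_nbIn, mem_erase]
  tauto

lemma nbIn_union {C S T : Finset V} : nbIn r C (S ∪ T) = nbIn r C S ∪ nbIn r C T := by
  ext v
  simp only [mem_nbIn, mem_union]
  constructor
  · rintro ⟨hvC, u, (h | h), hr⟩
    · exact Or.inl ⟨hvC, u, h, hr⟩
    · exact Or.inr ⟨hvC, u, h, hr⟩
  · rintro (⟨hvC, u, hu, hr⟩ | ⟨hvC, u, hu, hr⟩)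
    · exact ⟨hvC, u, Or.inl hu, hr⟩
    · exact ⟨hvC, u, Or.inr hu, hr⟩

lemma sum_shift (S : Finset V) (s : V → ℝ) (u₀ : V) (ε : ℝ) :
    ∑ u ∈ S, (if u = u₀ then s u - ε else s u)
      = (∑ u ∈ S, s u) - (if u₀ ∈ S then ε else 0) := by
  have h : ∀ u ∈ S, (if u = u₀ then s u - ε else s u) = s u - (if u = u₀ then ε else 0) := by
    intro u _; split <;> simp
  rw [Finset.sum_congr rfl h, Finset.sum_sub_distrib, Finset.sum_ite_eq' S u₀ fun _ => ε]

lemma gale : ∀ (n : ℕ) (B C : Finset V) (s d : V → ℝ),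
    B.card + C.card ≤ n →
    (∀ u ∈ B, 0 ≤ s u) → (∀ v ∈ C, 0 ≤ d v) →
    (∀ S ⊆ B, ∑ u ∈ S, s u ≤ ∑ v ∈ nbIn r C S, d v) →
    ∃ f : V → V → ℝ,
      (∀ u v, 0 ≤ f u v) ∧
      (∀ u v, f u v ≠ 0 → u ∈ B ∧ v ∈ C ∧ r u v) ∧
      (∀ u ∈ B, ∑ v ∈ C, f u v = s u) ∧
      (∀ v ∈ C, ∑ u ∈ B, f u v ≤ d v) := by
  intro n
  induction n with
  | zero =>
    intro B C s d hcard _ hd _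
    have hB : B = ∅ := card_eq_zero.1 (Nat.le_zero.1 (le_trans (Nat.le_add_right _ _) hcard))
    subst hB
    exact ⟨fun _ _ => 0, fun _ _ => le_refl 0, fun u v h => absurd rfl h,
      fun u hu => absurd hu (notMem_empty u),
      fun v hv => by simpa using hd v hv⟩
  | succ n ih =>
    intro B C s d hcard hs hd hall
    rcases B.eq_empty_or_nonempty with rfl | ⟨u₀, hu₀⟩
    · exact ⟨fun _ _ => 0, fun _ _ => le_refl 0, fun u v h => absurd rfl h,
        fun u hu => absurd hu (notMem_empty u), fun v hv => by simpa using hd v hv⟩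
    have hBpos : 1 ≤ B.card := card_pos.2 ⟨u₀, hu₀⟩
    have hcardE : (B.erase u₀).card + C.card ≤ n := by
      rw [card_erase_of_mem hu₀]; omega
    rcases eq_or_lt_of_le (hs u₀ hu₀) with hszero | hspos
    · -- the supply of u₀ is zero: discard u₀
      obtain ⟨f, hf0, hfsupp, hfrow, hfcol⟩ :=
        ih (B.erase u₀) C s d hcardE (fun u hu => hs u (mem_of_mem_erase hu)) hd
          (fun S hS => hall S (hS.trans (erase_subset _ _)))
      have hfu₀ : ∀ v, f u₀ v = 0 := fun v => by
        by_contra h; exact (notMem_erase u₀ B) (hfsupp u₀ v h).1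
      refine ⟨f, hf0, fun u v h =>
        ⟨mem_of_mem_erase (hfsupp u v h).1, (hfsupp u v h).2.1, (hfsupp u v h).2.2⟩, ?_, ?_⟩
      · intro u hu
        by_cases h : u = u₀
        · subst h; rw [Finset.sum_eq_zero fun v _ => hfu₀ v]; exact hszero
        · exact hfrow u (mem_erase.2 ⟨h, hu⟩)
      · intro v hv
        have hz : ∀ u ∈ B, u ∉ B.erase u₀ → f u v = 0 := by
          intro u huB hu'
          have : u = u₀ := by by_contra h; exact hu' (mem_erase.2 ⟨h, huB⟩)
          subst this; exact hfu₀ v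
        calc ∑ u ∈ B, f u v = ∑ u ∈ B.erase u₀, f u v :=
              (Finset.sum_subset (erase_subset u₀ B) hz).symm
          _ ≤ d v := hfcol v hv
    -- s u₀ > 0 : find a neighbour v₀ of u₀ with positive demand
    have h1 : s u₀ ≤ ∑ v ∈ nbIn r C {u₀}, d v := by
      have := hall {u₀} (singleton_subset_iff.2 hu₀)
      simpa using this
    have hv₀ex : ∃ v ∈ nbIn r C {u₀}, 0 < d v := by
      by_contra hcon
      push_neg at hcon
      have : ∑ v ∈ nbIn r C {u₀}, d v ≤ 0 := Finset.sum_nonpos hcon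
      linarith
    obtain ⟨v₀, hv₀n, hdv₀⟩ := hv₀ex
    have hv₀C : v₀ ∈ C := ((mem_nbIn r).1 hv₀n).1
    have hruv : r u₀ v₀ := by
      rcases ((mem_nbIn r).1 hv₀n).2 with ⟨u, hu, h⟩
      rw [mem_singleton] at hu; subst hu; exact h
    -- the bottleneck quantity ε
    set slack : Finset V → ℝ := fun S => (∑ v ∈ nbIn r C S, d v) - ∑ u ∈ S, s u with hslack
    set 𝒮 : Finset (Finset V) := B.powerset.filter (fun S => u₀ ∉ S ∧ ∃ u ∈ S, r u v₀) with h𝒮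
    set E : Finset ℝ := insert (s u₀) (insert (d v₀) (𝒮.image slack)) with hE
    have hEne : E.Nonempty := insert_nonempty _ _
    obtain ⟨ε, hεmem, hεmin⟩ : ∃ ε, ε ∈ E ∧ ∀ x ∈ E, ε ≤ x :=
      ⟨E.min' hEne, E.min'_mem hEne, fun x hx => min'_le E x hx⟩
    have hεs : ε ≤ s u₀ := hεmin _ (by simp [hE])
    have hεd : ε ≤ d v₀ := hεmin _ (by simp [hE])
    have hεslack : ∀ S ∈ 𝒮, ε ≤ slack S := fun S hS =>
      hεmin _ (by
        rw [hE]
        exact mem_insert_of_mem (mem_insert_of_mem (mem_image_of_mem slack hS)))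
    have hε0 : 0 ≤ ε := by
      rw [hE] at hεmem
      rcases mem_insert.1 hεmem with h | h
      · rw [h]; exact le_of_lt hspos
      rcases mem_insert.1 h with h | h
      · rw [h]; exact le_of_lt hdv₀
      · rcases mem_image.1 h with ⟨S, hS, hSe⟩
        rw [← hSe]
        have hSB : S ⊆ B := mem_powerset.1 (mem_filter.1 hS).1
        have := hall S hSB
        show 0 ≤ (∑ v ∈ nbIn r C S, d v) - ∑ u ∈ S, s u
        linarith
    -- updated supplies and demands
    set s' : V → ℝ := fun u => if u = u₀ then s u - ε else s u with hs'
    set d' : V → ℝ := fun v => if v = v₀ then d v - ε else d v with hd'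
    have hs'eq : ∀ u, u ≠ u₀ → s' u = s u := fun u h => by rw [hs']; simp [h]
    have hd'eq : ∀ v, v ≠ v₀ → d' v = d v := fun v h => by rw [hd']; simp [h]
    have hs'u₀ : s' u₀ = s u₀ - ε := by rw [hs']; simp
    have hd'v₀ : d' v₀ = d v₀ - ε := by rw [hd']; simp
    have hsum_s' : ∀ S : Finset V, ∑ u ∈ S, s' u = (∑ u ∈ S, s u) - (if u₀ ∈ S then ε else 0) :=
      fun S => sum_shift S s u₀ ε
    have hsum_d' : ∀ T : Finset V, ∑ v ∈ T, d' v = (∑ v ∈ T, d v) - (if v₀ ∈ T then ε else 0) :=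
      fun T => sum_shift T d v₀ ε
    -- updated Hall condition
    have hall' : ∀ S ⊆ B, ∑ u ∈ S, s' u ≤ ∑ v ∈ nbIn r C S, d' v := by
      intro S hS
      rw [hsum_s', hsum_d']
      by_cases hu : u₀ ∈ S
      · have hv : v₀ ∈ nbIn r C S := (mem_nbIn r).2 ⟨hv₀C, u₀, hu, hruv⟩
        simp only [hu, hv, if_pos]
        have := hall S hS
        linarith
      · by_cases hv : v₀ ∈ nbIn r C S
        · have hSmem : S ∈ 𝒮 := by
            rw [h𝒮]
            exact mem_filter.2 ⟨mem_powerset.2 hS, hu, ((mem_nbIn r).1 hv).2⟩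
          have hsl : ε ≤ (∑ v ∈ nbIn r C S, d v) - ∑ u ∈ S, s u := hεslack S hSmem
          simp only [if_neg hu, if_pos hv]
          linarith
        · simp only [if_neg hu, if_neg hv]
          have := hall S hS
          linarith
    -- case on which element achieves the minimum
    rw [hE] at hεmem
    rcases mem_insert.1 hεmem with hcase | hmem2
    · -- ε = s u₀ : remove u₀
      obtain ⟨f, hf0, hfsupp, hfrow, hfcol⟩ :=
        ih (B.erase u₀) C s' d' hcardE
          (fun u hu => by rw [hs'eq u (mem_erase.1 hu).1]; exact hs u (mem_of_mem_erase hu))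
          (fun v hv => by
            by_cases h : v = v₀
            · subst h; rw [hd'v₀]; linarith
            · rw [hd'eq v h]; exact hd v hv)
          (fun S hS => hall' S (hS.trans (erase_subset _ _)))
      have hfu₀ : ∀ v, f u₀ v = 0 := fun v => by
        by_contra h; exact (notMem_erase u₀ B) (hfsupp u₀ v h).1
      refine ⟨fun u v => f u v + if u = u₀ ∧ v = v₀ then ε else 0, ?_, ?_, ?_, ?_⟩
      · intro u v
        show 0 ≤ f u v + if u = u₀ ∧ v = v₀ then ε else 0
        have := hf0 u v
        split <;> linarith
      · intro u v h
        have h' : f u v + (if u = u₀ ∧ v = v₀ then ε else 0) ≠ 0 := h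
        by_cases h1 : f u v = 0
        · have huv : u = u₀ ∧ v = v₀ := by
            by_contra hc; rw [h1, if_neg hc, add_zero] at h'; exact h' rfl
          obtain ⟨h3, h4⟩ := huv; subst h3; subst h4
          exact ⟨hu₀, hv₀C, hruv⟩
        · obtain ⟨hx, hy, hz⟩ := hfsupp u v h1
          exact ⟨mem_of_mem_erase hx, hy, hz⟩
      · intro u hu
        show ∑ v ∈ C, (f u v + if u = u₀ ∧ v = v₀ then ε else 0) = s u
        rw [Finset.sum_add_distrib]
        by_cases h : u = u₀
        · rw [h, Finset.sum_eq_zero fun v _ => hfu₀ v]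
          have hcongr : ∀ v, (if u₀ = u₀ ∧ v = v₀ then ε else 0) = if v = v₀ then ε else 0 := by
            intro v; by_cases h : v = v₀ <;> simp [h]
          rw [Finset.sum_congr rfl fun v _ => hcongr v,
            Finset.sum_ite_eq' C v₀ fun _ => ε, if_pos hv₀C, hcase]
          ring
        · rw [Finset.sum_eq_zero (fun v _ => if_neg (fun hc : u = u₀ ∧ v = v₀ => h hc.1))]
          rw [hfrow u (mem_erase.2 ⟨h, hu⟩), hs'eq u h]
          ring
      · intro v hv
        show ∑ u ∈ B, (f u v + if u = u₀ ∧ v = v₀ then ε else 0) ≤ d v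
        rw [Finset.sum_add_distrib]
        have hsum1 : ∑ u ∈ B, f u v = ∑ u ∈ B.erase u₀, f u v := by
          refine (Finset.sum_subset (erase_subset u₀ B) ?_).symm
          intro u huB hu'
          have : u = u₀ := by by_contra hcc; exact hu' (mem_erase.2 ⟨hcc, huB⟩)
          subst this; exact hfu₀ v
        have hsum2 : ∑ u ∈ B, (if u = u₀ ∧ v = v₀ then ε else 0) = if v = v₀ then ε else 0 := by
          by_cases h : v = v₀
          · rw [h]
            have hcongr : ∀ u, (if u = u₀ ∧ v₀ = v₀ then ε else 0) = if u = u₀ then ε else 0 := by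
              intro u; by_cases h : u = u₀ <;> simp [h]
            rw [Finset.sum_congr rfl fun u _ => hcongr u,
              Finset.sum_ite_eq' B u₀ fun _ => ε, if_pos hu₀, if_pos rfl]
          · rw [if_neg h, Finset.sum_eq_zero (fun u _ => if_neg (fun hc : u = u₀ ∧ v = v₀ => h hc.2))]
        rw [hsum1, hsum2]
        have hcv := hfcol v hv
        by_cases h : v = v₀
        · rw [h, if_pos rfl]; rw [h, hd'v₀] at hcv; linarith
        · rw [if_neg h]; rw [hd'eq v h] at hcv; linarith
    rcases mem_insert.1 hmem2 with hcase | hmem3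
    · -- ε = d v₀ : remove v₀
      have hcardE2 : B.card + (C.erase v₀).card ≤ n := by
        have h1 := card_erase_of_mem hv₀C
        have hC1 : 1 ≤ C.card := card_pos.2 ⟨v₀, hv₀C⟩
        omega
      have hd'v₀0 : d' v₀ = 0 := by rw [hd'v₀, hcase]; ring
      obtain ⟨f, hf0, hfsupp, hfrow, hfcol⟩ :=
        ih B (C.erase v₀) s' d' hcardE2
          (fun u hu => by
            by_cases h : u = u₀
            · rw [h, hs'u₀]; linarith
            · rw [hs'eq u h]; exact hs u hu)
          (fun v hv => by
            rw [hd'eq v (mem_erase.1 hv).1]; exact hd v (mem_of_mem_erase hv))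
          (fun S hS => by
            rw [nbIn_erase r, Finset.sum_erase _ hd'v₀0]
            exact hall' S hS)
      have hfv₀ : ∀ u, f u v₀ = 0 := fun u => by
        by_contra h; exact (notMem_erase v₀ C) (hfsupp u v₀ h).2.1
      refine ⟨fun u v => f u v + if u = u₀ ∧ v = v₀ then ε else 0, ?_, ?_, ?_, ?_⟩
      · intro u v
        show 0 ≤ f u v + if u = u₀ ∧ v = v₀ then ε else 0
        have := hf0 u v
        split <;> linarith
      · intro u v h
        have h' : f u v + (if u = u₀ ∧ v = v₀ then ε else 0) ≠ 0 := h
        by_cases h1 : f u v = 0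
        · have huv : u = u₀ ∧ v = v₀ := by
            by_contra hc; rw [h1, if_neg hc, add_zero] at h'; exact h' rfl
          obtain ⟨h3, h4⟩ := huv; subst h3; subst h4
          exact ⟨hu₀, hv₀C, hruv⟩
        · obtain ⟨hx, hy, hz⟩ := hfsupp u v h1
          exact ⟨hx, mem_of_mem_erase hy, hz⟩
      · intro u hu
        show ∑ v ∈ C, (f u v + if u = u₀ ∧ v = v₀ then ε else 0) = s u
        rw [Finset.sum_add_distrib]
        have hsumf : ∑ v ∈ C, f u v = ∑ v ∈ C.erase v₀, f u v := by
          refine (Finset.sum_subset (erase_subset v₀ C) ?_).symm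
          intro v hvC hv'
          have : v = v₀ := by by_contra hcc; exact hv' (mem_erase.2 ⟨hcc, hvC⟩)
          rw [this]; exact hfv₀ u
        rw [hsumf, hfrow u hu]
        by_cases h : u = u₀
        · have hcongr : ∀ v, (if u = u₀ ∧ v = v₀ then ε else 0) = if v = v₀ then ε else 0 := by
            intro v; by_cases h2 : v = v₀ <;> simp [h, h2]
          rw [Finset.sum_congr rfl fun v _ => hcongr v,
            Finset.sum_ite_eq' C v₀ fun _ => ε, if_pos hv₀C, h, hs'u₀]
          ring
        · rw [Finset.sum_eq_zero (fun v _ => if_neg (fun hc : u = u₀ ∧ v = v₀ => h hc.1)),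
            hs'eq u h]
          ring
      · intro v hv
        show ∑ u ∈ B, (f u v + if u = u₀ ∧ v = v₀ then ε else 0) ≤ d v
        rw [Finset.sum_add_distrib]
        by_cases h : v = v₀
        · rw [h, Finset.sum_eq_zero fun u _ => hfv₀ u]
          have hcongr : ∀ u, (if u = u₀ ∧ v₀ = v₀ then ε else 0) = if u = u₀ then ε else 0 := by
            intro u; by_cases h2 : u = u₀ <;> simp [h2]
          rw [Finset.sum_congr rfl fun u _ => hcongr u,
            Finset.sum_ite_eq' B u₀ fun _ => ε, if_pos hu₀]
          rw [hcase]
          linarith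
        · rw [Finset.sum_eq_zero (fun u _ => if_neg (fun hc : u = u₀ ∧ v = v₀ => h hc.2)),
            add_zero]
          have := hfcol v (mem_erase.2 ⟨h, hv⟩)
          rw [hd'eq v h] at this
          exact this
    · -- ε = slack S₀ for a tight set S₀ : split
      rcases mem_image.1 hmem3 with ⟨S₀, hS₀mem, hcase⟩
      have hS₀B : S₀ ⊆ B := mem_powerset.1 (mem_filter.1 hS₀mem).1
      have hu₀S₀ : u₀ ∉ S₀ := (mem_filter.1 hS₀mem).2.1
      obtain ⟨u₁, hu₁, hru₁⟩ := (mem_filter.1 hS₀mem).2.2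
      set C₀ := nbIn r C S₀ with hC₀
      have hv₀C₀ : v₀ ∈ C₀ := (mem_nbIn r).2 ⟨hv₀C, u₁, hu₁, hru₁⟩
      have hC₀C : C₀ ⊆ C := nbIn_subset r C S₀
      have hεval : ε = (∑ v ∈ C₀, d v) - ∑ u ∈ S₀, s u := hcase.symm
      have htight : ∑ v ∈ C₀, d' v = ∑ u ∈ S₀, s' u := by
        rw [hsum_d' C₀, hsum_s' S₀, if_pos hv₀C₀, if_neg hu₀S₀, hεval]; ring
      have hS₀ltB : S₀.card < B.card :=
        card_lt_card ((ssubset_iff_of_subset hS₀B).2 ⟨u₀, hu₀, hu₀S₀⟩)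
      have hcard1 : S₀.card + C₀.card ≤ n := by
        have := card_le_card hC₀C
        omega
      have hcard2 : (B \ S₀).card + (C \ C₀).card ≤ n := by
        have h1 : (B \ S₀).card = B.card - S₀.card := card_sdiff_of_subset hS₀B
        have h2 := card_le_card (sdiff_subset : C \ C₀ ⊆ C)
        have h3 : 1 ≤ S₀.card := card_pos.2 ⟨u₁, hu₁⟩
        omega
      obtain ⟨f₁, hg0, hgsupp, hgrow, hgcol⟩ :=
        ih S₀ C₀ s' d' hcard1
          (fun u hu => by
            rw [hs'eq u (fun hh => hu₀S₀ (hh ▸ hu))]; exact hs u (hS₀B hu))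
          (fun v hv => by
            by_cases h : v = v₀
            · rw [h, hd'v₀]; linarith
            · rw [hd'eq v h]; exact hd v (hC₀C hv))
          (fun S hS => by
            rw [hC₀, nbIn_nbIn r hS]
            exact hall' S (hS.trans hS₀B))
      obtain ⟨f₂, hh0, hhsupp, hhrow, hhcol⟩ :=
        ih (B \ S₀) (C \ C₀) s' d' hcard2
          (fun u hu => by
            by_cases h : u = u₀
            · rw [h, hs'u₀]; linarith
            · rw [hs'eq u h]; exact hs u (mem_sdiff.1 hu).1)
          (fun v hv => by
            have hvv₀ : v ≠ v₀ := fun hh => (mem_sdiff.1 hv).2 (hh ▸ hv₀C₀)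
            rw [hd'eq v hvv₀]; exact hd v (mem_sdiff.1 hv).1)
          (fun T hT => by
            rw [nbIn_sdiff r]
            have hTB : T ⊆ B := hT.trans sdiff_subset
            have hdisj : Disjoint T S₀ := disjoint_of_subset_left hT sdiff_disjoint
            have hun : ∑ u ∈ T ∪ S₀, s' u = ∑ u ∈ T, s' u + ∑ u ∈ S₀, s' u :=
              Finset.sum_union hdisj
            have hh := hall' (T ∪ S₀) (union_subset hTB hS₀B)
            rw [nbIn_union r] at hh
            have hsplit : ∑ v ∈ nbIn r C T ∪ C₀, d' v
                = (∑ v ∈ nbIn r C T \ C₀, d' v) + ∑ v ∈ C₀, d' v := by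
              rw [← Finset.sum_union sdiff_disjoint, sdiff_union_self_eq_union]
            rw [hun, hsplit, htight] at hh
            linarith)
      refine ⟨fun u v => f₁ u v + f₂ u v + if u = u₀ ∧ v = v₀ then ε else 0, ?_, ?_, ?_, ?_⟩
      · intro u v
        show 0 ≤ f₁ u v + f₂ u v + if u = u₀ ∧ v = v₀ then ε else 0
        have := hg0 u v
        have := hh0 u v
        split <;> linarith
      · intro u v h
        have h' : f₁ u v + f₂ u v + (if u = u₀ ∧ v = v₀ then ε else 0) ≠ 0 := h
        by_cases h1 : f₁ u v = 0
        · by_cases h2 : f₂ u v = 0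
          · have huv : u = u₀ ∧ v = v₀ := by
              by_contra hc; rw [h1, h2, if_neg hc] at h'; exact h' (by ring)
            obtain ⟨h3, h4⟩ := huv; subst h3; subst h4
            exact ⟨hu₀, hv₀C, hruv⟩
          · obtain ⟨hx, hy, hz⟩ := hhsupp u v h2
            exact ⟨(mem_sdiff.1 hx).1, (mem_sdiff.1 hy).1, hz⟩
        · obtain ⟨hx, hy, hz⟩ := hgsupp u v h1
          exact ⟨hS₀B hx, hC₀C hy, hz⟩
      · intro u hu
        show ∑ v ∈ C, (f₁ u v + f₂ u v + if u = u₀ ∧ v = v₀ then ε else 0) = s u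
        rw [Finset.sum_add_distrib, Finset.sum_add_distrib]
        have hpush : ∑ v ∈ C, (if u = u₀ ∧ v = v₀ then ε else 0) = if u = u₀ then ε else 0 := by
          by_cases h : u = u₀
          · have hcongr : ∀ v, (if u = u₀ ∧ v = v₀ then ε else 0) = if v = v₀ then ε else 0 := by
              intro v; by_cases h2 : v = v₀ <;> simp [h, h2]
            rw [Finset.sum_congr rfl fun v _ => hcongr v,
              Finset.sum_ite_eq' C v₀ fun _ => ε, if_pos hv₀C, if_pos h]
          · rw [Finset.sum_eq_zero
              (fun v _ => if_neg (fun hc : u = u₀ ∧ v = v₀ => h hc.1)), if_neg h]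
        have hsum1 : ∑ v ∈ C, f₁ u v = ∑ v ∈ C₀, f₁ u v := by
          refine (Finset.sum_subset hC₀C ?_).symm
          intro v hvC hv'
          by_contra hne
          exact hv' (hgsupp u v hne).2.1
        have hsum2 : ∑ v ∈ C, f₂ u v = ∑ v ∈ C \ C₀, f₂ u v := by
          refine (Finset.sum_subset sdiff_subset ?_).symm
          intro v hvC hv'
          by_contra hne
          exact hv' (hhsupp u v hne).2.1
        rw [hpush, hsum1, hsum2]
        by_cases hS : u ∈ S₀
        · have h2 : ∀ v ∈ C \ C₀, f₂ u v = 0 := by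
            intro v _
            by_contra hne
            exact (mem_sdiff.1 (hhsupp u v hne).1).2 hS
          have hne : u ≠ u₀ := fun hh => hu₀S₀ (hh ▸ hS)
          rw [Finset.sum_eq_zero h2, hgrow u hS, hs'eq u hne, if_neg hne]
          ring
        · have h1 : ∀ v ∈ C₀, f₁ u v = 0 := by
            intro v _
            by_contra hne
            exact hS (hgsupp u v hne).1
          have huBS : u ∈ B \ S₀ := mem_sdiff.2 ⟨hu, hS⟩
          rw [Finset.sum_eq_zero h1, hhrow u huBS]
          by_cases h : u = u₀
          · rw [if_pos h, h, hs'u₀]; ring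
          · rw [if_neg h, hs'eq u h]; ring
      · intro v hv
        show ∑ u ∈ B, (f₁ u v + f₂ u v + if u = u₀ ∧ v = v₀ then ε else 0) ≤ d v
        rw [Finset.sum_add_distrib, Finset.sum_add_distrib]
        have hpush : ∑ u ∈ B, (if u = u₀ ∧ v = v₀ then ε else 0) = if v = v₀ then ε else 0 := by
          by_cases h : v = v₀
          · have hcongr : ∀ u, (if u = u₀ ∧ v = v₀ then ε else 0) = if u = u₀ then ε else 0 := by
              intro u; by_cases h2 : u = u₀ <;> simp [h, h2]
            rw [Finset.sum_congr rfl fun u _ => hcongr u,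
              Finset.sum_ite_eq' B u₀ fun _ => ε, if_pos hu₀, if_pos h]
          · rw [Finset.sum_eq_zero
              (fun u _ => if_neg (fun hc : u = u₀ ∧ v = v₀ => h hc.2)), if_neg h]
        have hsum1 : ∑ u ∈ B, f₁ u v = ∑ u ∈ S₀, f₁ u v := by
          refine (Finset.sum_subset hS₀B ?_).symm
          intro u huB hu'
          by_contra hne
          exact hu' (hgsupp u v hne).1
        have hsum2 : ∑ u ∈ B, f₂ u v = ∑ u ∈ B \ S₀, f₂ u v := by
          refine (Finset.sum_subset sdiff_subset ?_).symm
          intro u huB hu'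
          by_contra hne
          exact hu' (hhsupp u v hne).1
        rw [hpush, hsum1, hsum2]
        by_cases hvC₀ : v ∈ C₀
        · have h2 : ∀ u ∈ B \ S₀, f₂ u v = 0 := by
            intro u _
            by_contra hne
            exact (mem_sdiff.1 (hhsupp u v hne).2.1).2 hvC₀
          rw [Finset.sum_eq_zero h2]
          have hg := hgcol v hvC₀
          by_cases h : v = v₀
          · rw [if_pos h, h]; rw [h, hd'v₀] at hg; linarith
          · rw [if_neg h]; rw [hd'eq v h] at hg; linarith
        · have h1 : ∀ u ∈ S₀, f₁ u v = 0 := by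
            intro u _
            by_contra hne
            exact hvC₀ (hgsupp u v hne).2.1
          have hvCC : v ∈ C \ C₀ := mem_sdiff.2 ⟨hv, hvC₀⟩
          have hne : v ≠ v₀ := fun hh => hvC₀ (hh ▸ hv₀C₀)
          have hh2 := hhcol v hvCC
          rw [hd'eq v hne] at hh2
          rw [Finset.sum_eq_zero h1, if_neg hne]
          linarith

end GaleAux

/-- if `B` is the maximal bottleneck, `C = Γ(B)` and `α = w(C)/w(B) < 1`,
then there is a nonnegative flow `f`, supported on edges from `B` to `C`, with
`Σ_{v∈C} f(u,v) = w(u)` for every `u ∈ B` and `Σ_{u∈B} f(u,v) = w(v)/α` for every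
`v ∈ C`. -/
theorem maximal_bottleneck_flow {V : Type*} [Fintype V] [DecidableEq V]
    (G : SimpleGraph V) [DecidableRel G.Adj] (w : V → ℝ)
    (hw : ∀ v, 0 < w v) (hiso : ∀ v : V, ∃ u, G.Adj v u)
    (B C : Finset V) (hB : IsMaxBottleneck G w B) (hC : C = nbhd G B)
    (a : ℝ) (ha : a = wsum w C / wsum w B) (ha1 : a < 1) :
    ∃ f : V → V → ℝ,
      (∀ u v, 0 ≤ f u v) ∧
      (∀ u v, f u v ≠ 0 → u ∈ B ∧ v ∈ C ∧ G.Adj u v) ∧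
      (∀ u ∈ B, ∑ v ∈ C, f u v = w u) ∧
      (∀ v ∈ C, ∑ u ∈ B, f u v = w v / a) := by
  obtain ⟨hBne, hmin, -⟩ := hB
  have hwB : 0 < wsum w B := Finset.sum_pos (fun v _ => hw v) hBne
  have hCne : C.Nonempty := by
    obtain ⟨u₀, hu₀⟩ := hBne
    obtain ⟨u', hadj⟩ := hiso u₀
    exact ⟨u', hC ▸ mem_filter.2 ⟨mem_univ u', u₀, hu₀, hadj⟩⟩
  have hwC : 0 < wsum w C := Finset.sum_pos (fun v _ => hw v) hCne
  have hapos : 0 < a := ha ▸ div_pos hwC hwB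
  have haB : a * wsum w B = wsum w C := by
    rw [ha]; field_simp
  have hfilter : ∀ S ⊆ B, nbIn G.Adj C S = nbhd G S := by
    intro S hS
    ext v
    simp only [nbIn, nbhd, mem_filter, mem_univ, true_and]
    constructor
    · rintro ⟨_, h⟩; exact h
    · rintro ⟨u, hu, hadj⟩
      exact ⟨hC ▸ (mem_filter.2 ⟨mem_univ v, u, hS hu, hadj⟩), u, hu, hadj⟩
  have hgale : ∀ S ⊆ B, ∑ u ∈ S, w u ≤ ∑ v ∈ nbIn G.Adj C S, w v / a := by
    intro S hS
    rcases S.eq_empty_or_nonempty with rfl | hSne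
    · simp [nbIn]
    · have hwS : 0 < wsum w S := Finset.sum_pos (fun v _ => hw v) hSne
      have hm := hmin S hSne
      have haB' : alphaR G w B = a := by rw [alphaR, ← hC, ← ha]
      rw [haB'] at hm
      have h1 : a * wsum w S ≤ wsum w (nbhd G S) := by
        rw [alphaR] at hm
        exact (le_div_iff₀ hwS).1 hm |>.trans_eq (by ring) |>.trans_eq rfl
      rw [hfilter S hS, ← Finset.sum_div, le_div_iff₀ hapos]
      show (∑ u ∈ S, w u) * a ≤ ∑ v ∈ nbhd G S, w v
      rw [mul_comm]
      exact h1
  obtain ⟨f, hf0, hfsupp, hfrow, hfcol⟩ :=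
    gale G.Adj (B.card + C.card) B C w (fun v => w v / a) le_rfl
      (fun u _ => (hw u).le) (fun v _ => (div_pos (hw v) hapos).le) hgale
  refine ⟨f, hf0, hfsupp, hfrow, ?_⟩
  have htot : ∑ v ∈ C, (∑ u ∈ B, f u v) = ∑ v ∈ C, w v / a := by
    rw [Finset.sum_comm, Finset.sum_congr rfl hfrow, ← Finset.sum_div]
    show wsum w B = wsum w C / a
    rw [← haB, mul_comm, mul_div_assoc, div_self (ne_of_gt hapos), mul_one]
  exact fun v hv => (Finset.sum_eq_sum_iff_of_le hfcol).1 htot v hv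
end

section
/- Let G = (V,E;w) be a finite simple undirected graph with positive vertex weights and no isolated vertices, and suppose its minimal α-ratio equals 1, i.e. w(Γ(S)) ≥ w(S) for every nonempty S ⊆ V. Then there exists f : V × V → ℝ with f(u,v) ≥ 0 for all u,v and f(u,v) = 0 unless (u,v) ∈ E, such that Σ_{v∈Γ(u)} f(u,v) = w(u) and Σ_{v∈Γ(u)} f(v,u) = w(u) for every u ∈ V. -/
open Finset

/-!
The flow is a transport plan along the edges of `G` with both margins equal to `w`. By Farkas'
lemma it exists unless some potentials `p, q` with `p u + q v ≥ 0` on every edge have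
`∑ w p + ∑ w q < 0`. By the layer-cake formula this sum is
`∫₀^M (w{p > t} - w{p < -t} + w{q > t} - w{q < -t}) dt`, and the integrand is nonnegative: the
neighbourhood of `{p < -t}` lies in `{q > t}`, so the Hall condition `w(S) ≤ w(Γ(S))` gives
`w{p < -t} ≤ w{q > t}`, and symmetrically. Farkas' lemma applies because the margins of the
nonnegative edge-supported plans form a closed cone, the sup norm of such a plan being bounded by
its total mass.
-/

theorem IsClosed.image_of_norm_le {E F : Type*} [SeminormedAddCommGroup E] [ProperSpace E]
    [TopologicalSpace F] [T2Space F] {C : Set E} (hC : IsClosed C) {f : E → F}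
    (hf : Continuous f) {φ : F → ℝ} (hφ : Continuous φ) (hbound : ∀ x ∈ C, ‖x‖ ≤ φ (f x)) :
    IsClosed (f '' C) := by
  refine closure_subset_iff_isClosed.1 fun y hy => ?_
  set K := C ∩ Metric.closedBall 0 (φ y + 1)
  have hK : IsCompact K := (isCompact_closedBall 0 _).inter_left hC
  have hsub : {z | φ z < φ y + 1} ∩ f '' C ⊆ f '' K := by
    rintro _ ⟨hlt, x, hx, rfl⟩
    exact ⟨x, ⟨hx, mem_closedBall_zero_iff.2 ((hbound x hx).trans hlt.le)⟩, rfl⟩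
  have hyK : y ∈ closure (f '' K) :=
    closure_mono hsub ((isOpen_lt hφ continuous_const).inter_closure ⟨lt_add_one (φ y), hy⟩)
  obtain ⟨x, hx, rfl⟩ := (hK.image hf).isClosed.closure_subset hyK
  exact ⟨x, hx.1, rfl⟩

theorem LinearMap.apply_eq_sum_mul_single {ι R : Type*} [Fintype ι] [DecidableEq ι]
    [CommSemiring R] (ℓ : (ι → R) →ₗ[R] R) (y : ι → R) :
    ℓ y = ∑ i, y i * ℓ (Pi.single i 1) := by
  conv_lhs => rw [← Finset.univ_sum_single y]
  rw [map_sum]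
  refine Finset.sum_congr rfl fun i _ => ?_
  rw [← smul_eq_mul, ← map_smul, ← Pi.single_smul, smul_eq_mul, mul_one]

theorem antitone_indicator_Iio_one (x : ℝ) : Antitone ((Set.Iio x).indicator (1 : ℝ → ℝ)) := by
  intro s t hst
  simp only [Set.indicator_apply, Set.mem_Iio, Pi.one_apply]
  split_ifs with ht hs <;> first | exact absurd (hst.trans_lt ht) hs | norm_num

theorem intervalIntegral.integral_indicator_Iio_one {x M : ℝ} (hx : x ≤ M) (hM : 0 ≤ M) :
    ∫ t in (0 : ℝ)..M, (Set.Iio x).indicator 1 t = max x 0 := by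
  rw [intervalIntegral.integral_of_le hM, MeasureTheory.setIntegral_indicator measurableSet_Iio]
  have hset : Set.Ioc 0 M ∩ Set.Iio x = Set.Ioo 0 x := by
    ext t
    simp only [Set.mem_inter_iff, Set.mem_Ioc, Set.mem_Iio, Set.mem_Ioo]
    exact ⟨fun ⟨⟨h0, _⟩, hx⟩ => ⟨h0, hx⟩, fun ⟨h0, ht⟩ => ⟨⟨h0, ht.le.trans hx⟩, ht⟩⟩
  simp [hset]

theorem intervalIntegral.integral_indicator_Iio_sub_indicator_Iio_neg {x M : ℝ} (hx : |x| ≤ M) :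
    ∫ t in (0 : ℝ)..M, ((Set.Iio x).indicator 1 t - (Set.Iio (-x)).indicator 1 t) = x := by
  have hM : 0 ≤ M := (abs_nonneg x).trans hx
  rw [intervalIntegral.integral_sub (antitone_indicator_Iio_one _).intervalIntegrable
      (antitone_indicator_Iio_one _).intervalIntegrable,
    integral_indicator_Iio_one ((le_abs_self x).trans hx) hM,
    integral_indicator_Iio_one ((neg_le_abs x).trans hx) hM]
  rcases le_total 0 x with h | h <;> simp [h]

theorem Fintype.sum_mul_eq_intervalIntegral {ι : Type*} [Fintype ι] (c g : ι → ℝ) {M : ℝ}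
    (hM : ∀ i, |g i| ≤ M) :
    ∑ i, c i * g i = ∫ t in (0 : ℝ)..M, ((∑ i with t < g i, c i) - ∑ i with t < -g i, c i) := by
  have hterm : ∀ t, (∑ i with t < g i, c i) - ∑ i with t < -g i, c i
      = ∑ i, c i * ((Set.Iio (g i)).indicator 1 t - (Set.Iio (-g i)).indicator 1 t) := by
    intro t
    simp only [Finset.sum_filter, Set.indicator_apply, Set.mem_Iio, Pi.one_apply, mul_sub,
      mul_ite, mul_one, mul_zero, Finset.sum_sub_distrib]
  simp_rw [hterm]
  rw [intervalIntegral.integral_finsetSum fun i _ =>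
    ((antitone_indicator_Iio_one _).intervalIntegrable.sub
      (antitone_indicator_Iio_one _).intervalIntegrable).const_mul (c i)]
  simp_rw [intervalIntegral.integral_const_mul,
    intervalIntegral.integral_indicator_Iio_sub_indicator_Iio_neg (hM _)]

section Transport

variable {α β : Type*} (r : α → β → Prop)

def flowCone : PointedCone ℝ (α × β → ℝ) where
  carrier := {x | 0 ≤ x ∧ ∀ u v, ¬ r u v → x (u, v) = 0}
  add_mem' hx hy := ⟨add_nonneg hx.1 hy.1, fun u v h => by simp [hx.2 u v h, hy.2 u v h]⟩
  zero_mem' := ⟨le_rfl, fun _ _ _ => rfl⟩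
  smul_mem' c x hx := ⟨fun p => mul_nonneg c.2 (hx.1 p), fun u v h => by simp [hx.2 u v h]⟩

theorem mem_flowCone {x : α × β → ℝ} :
    x ∈ flowCone r ↔ 0 ≤ x ∧ ∀ u v, ¬ r u v → x (u, v) = 0 :=
  Iff.rfl

theorem isClosed_flowCone : IsClosed (flowCone r : Set (α × β → ℝ)) := by
  have hcoe : (flowCone r : Set (α × β → ℝ))
      = {x | 0 ≤ x} ∩ ⋂ u, ⋂ v, {x | ¬ r u v → x (u, v) = 0} := by
    ext x
    simp [mem_flowCone]
  rw [hcoe]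
  refine (isClosed_le continuous_const continuous_id).inter
    (isClosed_iInter fun u => isClosed_iInter fun v => ?_)
  by_cases h : r u v
  · simp [h]
  · simpa [h] using isClosed_eq (continuous_apply (u, v)) continuous_const

variable [Fintype α] [Fintype β]

def margins : (α × β → ℝ) →ₗ[ℝ] (α ⊕ β → ℝ) where
  toFun x := Sum.elim (fun u => ∑ v, x (u, v)) (fun v => ∑ u, x (u, v))
  map_add' x y := by ext (u | v) <;> simp [Finset.sum_add_distrib]
  map_smul' c x := by ext (u | v) <;> simp [Finset.mul_sum]

@[simp]
theorem margins_inl (x : α × β → ℝ) (u : α) : margins x (Sum.inl u) = ∑ v, x (u, v) := rfl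

@[simp]
theorem margins_inr (x : α × β → ℝ) (v : β) : margins x (Sum.inr v) = ∑ u, x (u, v) := rfl

theorem margins_single [DecidableEq α] [DecidableEq β] (u : α) (v : β) :
    margins (Pi.single (u, v) 1) = Pi.single (Sum.inl u) 1 + Pi.single (Sum.inr v) 1 := by
  ext (u' | v') <;> simp [Pi.single_apply, Prod.ext_iff, ite_and]

theorem isClosed_image_margins_flowCone :
    IsClosed (margins '' (flowCone r : Set (α × β → ℝ))) := by
  refine (isClosed_flowCone r).image_of_norm_le margins.continuous_of_finiteDimensional
    (φ := fun y => ∑ u, y (Sum.inl u)) (by fun_prop) fun x hx => ?_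
  have hx0 : ∀ p, 0 ≤ x p := hx.1
  calc ‖x‖ ≤ ∑ p, x p := (pi_norm_le_iff_of_nonneg (Finset.sum_nonneg fun p _ => hx0 p)).2
        fun p => (Real.norm_of_nonneg (hx0 p)).trans_le
          (Finset.single_le_sum (fun p _ => hx0 p) (Finset.mem_univ p))
    _ = ∑ u, margins x (Sum.inl u) := Fintype.sum_prod_type x

variable [∀ u v, Decidable (r u v)] {a : α → ℝ} {b : β → ℝ}

theorem sum_lt_neg_le_sum_lt_of_hall (hb : 0 ≤ b)
    (hall : ∀ S : Finset α, ∑ u ∈ S, a u ≤ ∑ v with ∃ u ∈ S, r u v, b v)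
    {p : α → ℝ} {q : β → ℝ} (hpq : ∀ u v, r u v → 0 ≤ p u + q v) (t : ℝ) :
    ∑ u with t < -p u, a u ≤ ∑ v with t < q v, b v := by
  refine (hall _).trans (Finset.sum_le_sum_of_subset_of_nonneg (fun v hv => ?_) fun v _ _ => hb v)
  obtain ⟨u, hu, huv⟩ := (Finset.mem_filter.1 hv).2
  have htu : t < -p u := (Finset.mem_filter.1 hu).2
  exact Finset.mem_filter.2 ⟨Finset.mem_univ v, by linarith [hpq u v huv]⟩

theorem sum_mul_add_sum_mul_nonneg_of_hall (ha : 0 ≤ a) (hb : 0 ≤ b)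
    (hall : ∀ S : Finset α, ∑ u ∈ S, a u ≤ ∑ v with ∃ u ∈ S, r u v, b v)
    (hall' : ∀ T : Finset β, ∑ v ∈ T, b v ≤ ∑ u with ∃ v ∈ T, r u v, a u)
    {p : α → ℝ} {q : β → ℝ} (hpq : ∀ u v, r u v → 0 ≤ p u + q v) :
    0 ≤ ∑ u, a u * p u + ∑ v, b v * q v := by
  set g : α ⊕ β → ℝ := Sum.elim p q
  have hM : ∀ s, |g s| ≤ ∑ s, |g s| := fun s =>
    Finset.single_le_sum (fun s _ => abs_nonneg (g s)) (Finset.mem_univ s)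
  have hsum : ∑ u, a u * p u + ∑ v, b v * q v = ∑ s, Sum.elim a b s * g s := by
    simp [Fintype.sum_sum_type, g]
  rw [hsum, Fintype.sum_mul_eq_intervalIntegral _ _ hM]
  refine intervalIntegral.integral_nonneg (Finset.sum_nonneg fun s _ => abs_nonneg _)
    fun t _ => ?_
  have hqp : ∀ v u, r u v → 0 ≤ q v + p u := fun v u h => by linarith [hpq u v h]
  have hpq_t := sum_lt_neg_le_sum_lt_of_hall r hb hall hpq t
  have hqp_t := sum_lt_neg_le_sum_lt_of_hall (fun v u => r u v) ha hall' hqp t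
  have hpos : ∑ s with t < g s, Sum.elim a b s
      = ∑ u with t < p u, a u + ∑ v with t < q v, b v := by
    simp only [Finset.sum_filter, Fintype.sum_sum_type]; rfl
  have hneg : ∑ s with t < -g s, Sum.elim a b s
      = ∑ u with t < -p u, a u + ∑ v with t < -q v, b v := by
    simp only [Finset.sum_filter, Fintype.sum_sum_type]; rfl
  linarith

variable [DecidableEq α] [DecidableEq β]

theorem sum_elim_mem_image_margins_flowCone (ha : 0 ≤ a) (hb : 0 ≤ b)
    (hall : ∀ S : Finset α, ∑ u ∈ S, a u ≤ ∑ v with ∃ u ∈ S, r u v, b v)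
    (hall' : ∀ T : Finset β, ∑ v ∈ T, b v ≤ ∑ u with ∃ v ∈ T, r u v, a u) :
    Sum.elim a b ∈ margins '' (flowCone r : Set (α × β → ℝ)) := by
  by_contra hnot
  let D : ProperCone ℝ (α ⊕ β → ℝ) :=
    ⟨(flowCone r).map margins, by simpa using isClosed_image_margins_flowCone r⟩
  obtain ⟨ℓ, hℓD, hℓab⟩ :=
    D.hyperplane_separation_point (x₀ := Sum.elim a b) (by simpa [D] using hnot)
  have hedge : ∀ u v, r u v →
      0 ≤ ℓ (Pi.single (Sum.inl u) 1) + ℓ (Pi.single (Sum.inr v) 1) := by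
    intro u v huv
    have hsingle : Pi.single (u, v) 1 ∈ flowCone r := by
      refine ⟨Pi.single_nonneg.2 zero_le_one, fun u' v' h => Pi.single_eq_of_ne ?_ _⟩
      rintro ⟨⟩
      exact h huv
    rw [← map_add, ← margins_single]
    exact hℓD _ (PointedCone.mem_map.2 ⟨_, hsingle, rfl⟩)
  have hℓ : ℓ (Sum.elim a b) = ∑ u, a u * ℓ (Pi.single (Sum.inl u) 1)
      + ∑ v, b v * ℓ (Pi.single (Sum.inr v) 1) := by
    rw [← ContinuousLinearMap.coe_coe, LinearMap.apply_eq_sum_mul_single, Fintype.sum_sum_type]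
    rfl
  exact hℓab.not_ge (hℓ ▸ sum_mul_add_sum_mul_nonneg_of_hall r ha hb hall hall' hedge)

theorem exists_transport_plan (ha : 0 ≤ a) (hb : 0 ≤ b)
    (hall : ∀ S : Finset α, ∑ u ∈ S, a u ≤ ∑ v with ∃ u ∈ S, r u v, b v)
    (hall' : ∀ T : Finset β, ∑ v ∈ T, b v ≤ ∑ u with ∃ v ∈ T, r u v, a u) :
    ∃ f : α → β → ℝ, (∀ u v, 0 ≤ f u v) ∧ (∀ u v, f u v ≠ 0 → r u v) ∧
      (∀ u, ∑ v, f u v = a u) ∧ ∀ v, ∑ u, f u v = b v := by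
  obtain ⟨x, ⟨hx0, hxr⟩, hx⟩ := sum_elim_mem_image_margins_flowCone r ha hb hall hall'
  exact ⟨fun u v => x (u, v), fun u v => hx0 (u, v), fun u v h => not_not.1 (mt (hxr u v) h),
    fun u => congrFun hx (Sum.inl u), fun v => congrFun hx (Sum.inr v)⟩

end Transport

theorem unit_alpha_flow_general {V : Type*} [Fintype V] [DecidableEq V]
    (G : SimpleGraph V) [DecidableRel G.Adj] (w : V → ℝ)
    (hw : ∀ v, 0 < w v)
    (hα : ∀ S : Finset V, S.Nonempty → wsum w S ≤ wsum w (nbhd G S)) :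
    ∃ f : V → V → ℝ,
      (∀ u v, 0 ≤ f u v) ∧
      (∀ u v, f u v ≠ 0 → G.Adj u v) ∧
      (∀ u : V, ∑ v ∈ G.neighborFinset u, f u v = w u) ∧
      (∀ u : V, ∑ v ∈ G.neighborFinset u, f v u = w u) := by
  have hw0 : 0 ≤ w := fun v => (hw v).le
  have hall : ∀ S : Finset V, ∑ u ∈ S, w u ≤ ∑ v with ∃ u ∈ S, G.Adj u v, w v := by
    intro S
    rcases S.eq_empty_or_nonempty with rfl | hS
    · simp
    · exact hα S hS
  have hall' : ∀ T : Finset V, ∑ v ∈ T, w v ≤ ∑ u with ∃ v ∈ T, G.Adj u v, w u := by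
    simpa only [G.adj_comm] using hall
  obtain ⟨f, hf0, hfG, hrow, hcol⟩ := exists_transport_plan G.Adj hw0 hw0 hall hall'
  have hsupp : ∀ u v, v ∉ G.neighborFinset u → f u v = 0 ∧ f v u = 0 := fun u v hv =>
    ⟨not_not.1 (mt (hfG u v) (by simpa using hv)),
      not_not.1 (mt (hfG v u) (by simpa [G.adj_comm] using hv))⟩
  refine ⟨f, hf0, hfG, fun u => ?_, fun u => ?_⟩
  · rw [← hrow u]
    exact Finset.sum_subset (Finset.subset_univ _) fun v _ hv => (hsupp u v hv).1
  · rw [← hcol u]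
    exact Finset.sum_subset (Finset.subset_univ _) fun v _ hv => (hsupp u v hv).2

/-- if the minimal α-ratio of `G` equals `1`, i.e. `w(Γ(S)) ≥ w(S)` for
every nonempty `S ⊆ V`, then there is a nonnegative flow `f` supported on edges of `G`
with `Σ_{v∈Γ(u)} f(u,v) = w(u)` and `Σ_{v∈Γ(u)} f(v,u) = w(u)` for every vertex `u`. -/
theorem unit_alpha_flow {V : Type*} [Fintype V] [DecidableEq V]
    (G : SimpleGraph V) [DecidableRel G.Adj] (w : V → ℝ)
    (hw : ∀ v, 0 < w v) (hiso : ∀ v : V, ∃ u, G.Adj v u)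
    (hα : ∀ S : Finset V, S.Nonempty → wsum w S ≤ wsum w (nbhd G S)) :
    ∃ f : V → V → ℝ,
      (∀ u v, 0 ≤ f u v) ∧
      (∀ u v, f u v ≠ 0 → G.Adj u v) ∧
      (∀ u : V, ∑ v ∈ G.neighborFinset u, f u v = w u) ∧
      (∀ u : V, ∑ v ∈ G.neighborFinset u, f v u = w u) :=
  unit_alpha_flow_general G w hw hα
end

section
/- Let G be a finite simple undirected connected graph with at least two vertices and positive vertex weights, with bottleneck decomposition {(B_1,C_1),…,(B_k,C_k)} and α_i = w(C_i)/w(B_i), and let X be a BD-mechanism allocation. Then X satisfies proportional response: for every u ∈ V one has U_u(X) > 0, and for every v ∈ Γ(u), x_{uv} = (x_{vu}·w(v)) / U_u(X), where U_u(X) = Σ_{k∈Γ(u)} x_{ku}·w(k). -/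
open Finset

/-- The neighborhood of `S` inside the induced subgraph on `A`: all vertices of `A` adjacent
to at least one vertex of `S`. -/
def nbhdIn {V : Type*} [DecidableEq V] (G : SimpleGraph V) [DecidableRel G.Adj]
    (A S : Finset V) : Finset V :=
  A.filter fun v => ∃ u ∈ S, G.Adj u v

/-- The α-ratio of `S` computed inside the induced subgraph on `A`. -/
noncomputable def alphaIn {V : Type*} [DecidableEq V] (G : SimpleGraph V)
    [DecidableRel G.Adj] (w : V → ℝ) (A S : Finset V) : ℝ :=
  wsum w (nbhdIn G A S) / wsum w S

/-- `B` is the maximal bottleneck of the induced subgraph `G[A]`: it is a nonempty subset of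
`A` of minimal α-ratio (within `G[A]`) and every strictly larger subset of `A` has strictly
larger α-ratio. -/
def IsMaxBottleneckIn {V : Type*} [DecidableEq V] (G : SimpleGraph V) [DecidableRel G.Adj]
    (w : V → ℝ) (A B : Finset V) : Prop :=
  B.Nonempty ∧ B ⊆ A ∧
    (∀ S : Finset V, S.Nonempty → S ⊆ A → alphaIn G w A B ≤ alphaIn G w A S) ∧
    ∀ B' : Finset V, B ⊂ B' → B' ⊆ A → alphaIn G w A B < alphaIn G w A B'


/-- `x` is an allocation on `G`: nonnegative, supported on edges, and each vertex
distributes its whole (unit fraction of) resource: `Σ_{v∈Γ(u)} x_{uv} = 1`. -/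
def IsAllocation {V : Type*} [Fintype V] [DecidableEq V] (G : SimpleGraph V)
    [DecidableRel G.Adj] (x : V → V → ℝ) : Prop :=
  (∀ u v, 0 ≤ x u v) ∧ (∀ u v, ¬ G.Adj u v → x u v = 0) ∧
    ∀ u : V, ∑ v ∈ G.neighborFinset u, x u v = 1

/-- The utility `U_u(X) = Σ_{v∈Γ(u)} x_{vu}·w(v)` of agent `u` under allocation `x`. -/
def util {V : Type*} [Fintype V] [DecidableEq V] (G : SimpleGraph V) [DecidableRel G.Adj]
    (w : V → ℝ) (x : V → V → ℝ) (u : V) : ℝ :=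
  ∑ v ∈ G.neighborFinset u, x v u * w v

/-- `x` is a BD-mechanism allocation for the bottleneck decomposition `(B i, C i)` with
α-ratios `alpha i`: it is an allocation, exchange happens only along edges between `B i`
and `C i` of the same pair, and `x_{vu}·w(v) = α_i·x_{uv}·w(u)` for every edge `(u,v)`
with `u ∈ B i`, `v ∈ C i`. -/
def IsBDAllocation {V : Type*} [Fintype V] [DecidableEq V] (G : SimpleGraph V)
    [DecidableRel G.Adj] (w : V → ℝ) (k : ℕ) (B C : Fin k → Finset V)
    (x : V → V → ℝ) : Prop :=
  IsAllocation G x ∧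
    (∀ u v : V, x u v ≠ 0 → ∃ i : Fin k, (u ∈ B i ∧ v ∈ C i) ∨ (u ∈ C i ∧ v ∈ B i)) ∧
    ∀ i : Fin k, ∀ u ∈ B i, ∀ v ∈ C i, G.Adj u v →
      x v u * w v = (wsum w (C i) / wsum w (B i)) * (x u v * w u)

/-- every BD-mechanism allocation satisfies proportional response: every
agent has positive utility and `x_{uv} = x_{vu}·w(v) / U_u(X)` for every `v ∈ Γ(u)`. -/
theorem bd_mechanism_proportional_response {V : Type*} [Fintype V] [DecidableEq V]
    (G : SimpleGraph V) [DecidableRel G.Adj] (w : V → ℝ)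
    (hw : ∀ v, 0 < w v) (hconn : G.Connected) (hcard : 2 ≤ Fintype.card V)
    (k : ℕ) (B C : Fin k → Finset V) (Vs : Fin (k + 1) → Finset V)
    (hV0 : Vs 0 = univ)
    (hVsucc : ∀ i : Fin k, Vs i.succ = Vs i.castSucc \ (B i ∪ C i))
    (hVlast : Vs (Fin.last k) = ∅)
    (hB : ∀ i : Fin k, IsMaxBottleneckIn G w (Vs i.castSucc) (B i))
    (hC : ∀ i : Fin k, C i = nbhdIn G (Vs i.castSucc) (B i))
    (x : V → V → ℝ) (hx : IsBDAllocation G w k B C x) :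
    (∀ u : V, 0 < util G w x u) ∧
    (∀ u : V, ∀ v ∈ G.neighborFinset u, x u v = x v u * w v / util G w x u) := by
  classical
  obtain ⟨⟨hxnn, hxedge, hxsum⟩, hsupp, hrel⟩ := hx
  have hwpos : ∀ (S : Finset V), S.Nonempty → 0 < wsum w S :=
    fun S hS => Finset.sum_pos (fun i _ => hw i) hS
  have hwmono : ∀ (S T : Finset V), S ⊆ T → wsum w S ≤ wsum w T :=
    fun S T h => Finset.sum_le_sum_of_subset_of_nonneg h (fun i _ _ => (hw i).le)
  have hBsub : ∀ i : Fin k, B i ⊆ Vs i.castSucc := fun i => (hB i).2.1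
  have hCsub : ∀ i : Fin k, C i ⊆ Vs i.castSucc := fun i => by
    rw [hC i]; exact Finset.filter_subset _ _
  have hBC_not : ∀ i : Fin k, ∀ u : V, u ∈ B i ∪ C i → u ∉ Vs i.succ := by
    intro i u hu hmem
    rw [hVsucc i] at hmem
    exact (Finset.mem_sdiff.1 hmem).2 hu
  have hVanti : ∀ j i : Fin (k+1), i ≤ j → Vs j ⊆ Vs i := by
    intro j
    induction j using Fin.induction with
    | zero =>
      intro i hi
      have h0 : i = 0 := le_antisymm hi (Fin.zero_le i)
      rw [h0]
    | succ i' IH =>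
      intro i hi
      by_cases h : i = i'.succ
      · rw [h]
      · have hv : i.val ≤ i'.val + 1 := by simpa [Fin.le_def] using hi
        have hne : i.val ≠ i'.val + 1 := fun hh => h (Fin.ext (by simpa using hh))
        have h1 : i ≤ i'.castSucc := by
          simp only [Fin.le_def, Fin.coe_castSucc]; omega
        calc Vs i'.succ ⊆ Vs i'.castSucc := by
              rw [hVsucc i']; exact Finset.sdiff_subset
        _ ⊆ Vs i := IH i h1
  have hlevel_ex : ∀ u : V, ∃ i : Fin k, u ∈ B i ∪ C i := by
    intro u
    have h : ∀ j : Fin (k+1), u ∈ Vs j ∨ ∃ i : Fin k, u ∈ B i ∪ C i := by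
      intro j
      induction j using Fin.induction with
      | zero => left; rw [hV0]; exact Finset.mem_univ u
      | succ i IH =>
        rcases IH with h | h
        · by_cases h2 : u ∈ B i ∪ C i
          · exact Or.inr ⟨i, h2⟩
          · left; rw [hVsucc i]; exact Finset.mem_sdiff.2 ⟨h, h2⟩
        · exact Or.inr h
    rcases h (Fin.last k) with h | h
    · rw [hVlast] at h; exact absurd h (Finset.notMem_empty u)
    · exact h
  have hlevel_uniq : ∀ (i j : Fin k) (u : V), u ∈ B i ∪ C i → u ∈ B j ∪ C j → i = j := by
    have key : ∀ (i j : Fin k) (u : V), i < j → u ∈ B i ∪ C i → u ∈ B j ∪ C j → False := by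
      intro i j u hij hi hj
      have h1 : u ∈ Vs j.castSucc := (Finset.union_subset (hBsub j) (hCsub j)) hj
      have hlt : i.val < j.val := hij
      have h2 : (i.succ : Fin (k+1)) ≤ j.castSucc := by
        simp only [Fin.le_def, Fin.val_succ, Fin.coe_castSucc]; omega
      exact hBC_not i u hi (hVanti j.castSucc i.succ h2 h1)
    intro i j u hi hj
    rcases lt_trichotomy i j with h | h | h
    · exact (key i j u h hi hj).elim
    · exact h
    · exact (key j i u h hj hi).elim
  have hnoiso : ∀ (j : Fin (k+1)), ∀ u ∈ Vs j, ∃ v ∈ Vs j, G.Adj u v := by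
    intro j
    induction j using Fin.cases with
    | zero =>
      intro u hu
      obtain ⟨v, hv⟩ := Fintype.exists_ne_of_one_lt_card (by omega) u
      obtain ⟨p⟩ := hconn.preconnected u v
      cases p with
      | nil => exact absurd rfl hv
      | cons h q => exact ⟨_, by rw [hV0]; exact Finset.mem_univ _, h⟩
    | succ i =>
      intro u hu
      by_contra hcon
      push_neg at hcon
      rw [hVsucc i] at hu
      obtain ⟨huA, huBC⟩ := Finset.mem_sdiff.1 hu
      have hnb : ∀ v : V, G.Adj u v → v ∈ Vs i.castSucc → v ∈ C i := by
        intro v hadj hvA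
        by_cases hvs : v ∈ Vs i.succ
        · exact absurd hadj (hcon v hvs)
        · have hmem : v ∈ B i ∪ C i := by
            by_contra hvbc
            exact hvs (by rw [hVsucc i]; exact Finset.mem_sdiff.2 ⟨hvA, hvbc⟩)
          rcases Finset.mem_union.1 hmem with hvB | hvC
          · have huC : u ∈ C i := by
              rw [hC i]; exact Finset.mem_filter.2 ⟨huA, v, hvB, hadj.symm⟩
            exact absurd (Finset.mem_union.2 (Or.inr huC)) huBC
          · exact hvC
      have huB : u ∉ B i := fun hh => huBC (Finset.mem_union.2 (Or.inl hh))
      have hss : B i ⊂ insert u (B i) := Finset.ssubset_insert huB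
      have hsub : insert u (B i) ⊆ Vs i.castSucc :=
        Finset.insert_subset_iff.2 ⟨huA, hBsub i⟩
      have hG : nbhdIn G (Vs i.castSucc) (insert u (B i)) ⊆ C i := by
        intro t ht
        obtain ⟨htA, s, hs, hadj⟩ := Finset.mem_filter.1 ht
        rcases Finset.mem_insert.1 hs with rfl | hsB
        · exact hnb t hadj htA
        · rw [hC i]; exact Finset.mem_filter.2 ⟨htA, s, hsB, hadj⟩
      have hmax := (hB i).2.2.2 (insert u (B i)) hss hsub
      have hwB : 0 < wsum w (B i) := hwpos _ (hB i).1
      have hCnn : (0:ℝ) ≤ wsum w (C i) := Finset.sum_nonneg (fun t _ => (hw t).le)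
      have halpha : alphaIn G w (Vs i.castSucc) (insert u (B i)) ≤
          alphaIn G w (Vs i.castSucc) (B i) := by
        have e1 : alphaIn G w (Vs i.castSucc) (B i) = wsum w (C i) / wsum w (B i) := by
          unfold alphaIn; rw [← hC i]
        rw [e1]
        unfold alphaIn
        have h2 : wsum w (insert u (B i)) = w u + wsum w (B i) := by
          unfold wsum; rw [Finset.sum_insert huB]
        rw [h2]
        have h3 : wsum w (nbhdIn G (Vs i.castSucc) (insert u (B i))) ≤ wsum w (C i) :=
          hwmono _ _ hG
        exact div_le_div₀ hCnn h3 hwB (by linarith [(hw u).le])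
      exact absurd hmax (not_lt.2 halpha)
  have hCne : ∀ i : Fin k, (C i).Nonempty := by
    intro i
    obtain ⟨b, hb⟩ := (hB i).1
    obtain ⟨v, hvA, hadj⟩ := hnoiso i.castSucc b (hBsub i hb)
    exact ⟨v, by rw [hC i]; exact Finset.mem_filter.2 ⟨hvA, b, hb, hadj⟩⟩
  have hwBpos : ∀ i : Fin k, 0 < wsum w (B i) := fun i => hwpos _ (hB i).1
  have hwCpos : ∀ i : Fin k, 0 < wsum w (C i) := fun i => hwpos _ (hCne i)
  have halle1 : ∀ i : Fin k, wsum w (C i) ≤ wsum w (B i) := by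
    intro i
    obtain ⟨b, hb⟩ := (hB i).1
    have hne : (Vs i.castSucc).Nonempty := ⟨b, hBsub i hb⟩
    have hmin := (hB i).2.2.1 (Vs i.castSucc) hne Finset.Subset.rfl
    have e1 : alphaIn G w (Vs i.castSucc) (B i) = wsum w (C i) / wsum w (B i) := by
      unfold alphaIn; rw [← hC i]
    have e2 : alphaIn G w (Vs i.castSucc) (Vs i.castSucc) ≤ 1 := by
      unfold alphaIn
      exact div_le_one_of_le₀ (hwmono _ _ (Finset.filter_subset _ _)) (hwpos _ hne).le
    rw [e1] at hmin
    have h3 : wsum w (C i) / wsum w (B i) ≤ 1 := le_trans hmin e2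
    exact (div_le_one (hwBpos i)).1 h3
  have hBCeq : ∀ i : Fin k, (B i ∩ C i).Nonempty → wsum w (C i) / wsum w (B i) = 1 := by
    intro i hD
    have hwD : 0 < wsum w (B i ∩ C i) := hwpos _ hD
    have hBleC : wsum w (B i) ≤ wsum w (C i) := by
      by_cases hS : (B i \ C i).Nonempty
      · have hkey : nbhdIn G (Vs i.castSucc) (B i \ C i) ⊆ C i \ B i := by
          intro t ht
          obtain ⟨htA, s, hsS, hadj⟩ := Finset.mem_filter.1 ht
          obtain ⟨hsB, hsC⟩ := Finset.mem_sdiff.1 hsS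
          refine Finset.mem_sdiff.2 ⟨?_, ?_⟩
          · rw [hC i]; exact Finset.mem_filter.2 ⟨htA, s, hsB, hadj⟩
          · intro htB
            apply hsC
            rw [hC i]
            exact Finset.mem_filter.2 ⟨hBsub i hsB, t, htB, hadj.symm⟩
        have hmin := (hB i).2.2.1 (B i \ C i) hS
          ((Finset.sdiff_subset).trans (hBsub i))
        have e1 : alphaIn G w (Vs i.castSucc) (B i) = wsum w (C i) / wsum w (B i) := by
          unfold alphaIn; rw [← hC i]
        rw [e1] at hmin
        unfold alphaIn at hmin
        have hsplitC : wsum w (C i \ B i) + wsum w (B i ∩ C i) = wsum w (C i) := by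
          have e : C i \ B i = C i \ (B i ∩ C i) := by
            ext t; simp only [Finset.mem_sdiff, Finset.mem_inter]; tauto
          unfold wsum
          rw [e]
          exact Finset.sum_sdiff Finset.inter_subset_right
        have hsplitB : wsum w (B i \ C i) + wsum w (B i ∩ C i) = wsum w (B i) := by
          have e : B i \ C i = B i \ (B i ∩ C i) := by
            ext t; simp only [Finset.mem_sdiff, Finset.mem_inter]; tauto
          unfold wsum
          rw [e]
          exact Finset.sum_sdiff Finset.inter_subset_left
        have hwS : 0 < wsum w (B i \ C i) := hwpos _ hS
        have h2 : wsum w (C i) * wsum w (B i \ C i) ≤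
            wsum w (nbhdIn G (Vs i.castSucc) (B i \ C i)) * wsum w (B i) :=
          (div_le_div_iff₀ (hwBpos i) hwS).1 hmin
        have h3 : wsum w (nbhdIn G (Vs i.castSucc) (B i \ C i)) ≤ wsum w (C i \ B i) :=
          hwmono _ _ hkey
        nlinarith [hwBpos i, hwCpos i, mul_le_mul_of_nonneg_right h3 (hwBpos i).le]
      · have hsub : B i ⊆ C i := by
          rw [← Finset.sdiff_eq_empty_iff_subset]
          exact Finset.not_nonempty_iff_eq_empty.1 hS
        exact hwmono _ _ hsub
    have heq : wsum w (C i) = wsum w (B i) := le_antisymm (halle1 i) hBleC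
    rw [heq]
    exact div_self (ne_of_gt (hwBpos i))
  have hxu0 : ∀ (u v : V) (i : Fin k), u ∈ B i ∪ C i →
      (u ∈ B i → v ∉ C i) → (u ∈ C i → v ∉ B i) → x u v = 0 := by
    intro u v i hui h1 h2
    by_contra h
    obtain ⟨j, hj⟩ := hsupp u v h
    rcases hj with ⟨huB, hvC⟩ | ⟨huC, hvB⟩
    · have hji : j = i := hlevel_uniq j i u (Finset.mem_union.2 (Or.inl huB)) hui
      subst hji
      exact h1 huB hvC
    · have hji : j = i := hlevel_uniq j i u (Finset.mem_union.2 (Or.inr huC)) hui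
      subst hji
      exact h2 huC hvB
  have hxv0 : ∀ (u v : V) (i : Fin k), u ∈ B i ∪ C i →
      (u ∈ C i → v ∉ B i) → (u ∈ B i → v ∉ C i) → x v u = 0 := by
    intro u v i hui h1 h2
    by_contra h
    obtain ⟨j, hj⟩ := hsupp v u h
    rcases hj with ⟨hvB, huC⟩ | ⟨hvC, huB⟩
    · have hji : j = i := hlevel_uniq j i u (Finset.mem_union.2 (Or.inr huC)) hui
      subst hji
      exact h1 huC hvB
    · have hji : j = i := hlevel_uniq j i u (Finset.mem_union.2 (Or.inl huB)) hui
      subst hji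
      exact h2 huB hvC
  have key : ∀ u : V, ∃ c : ℝ, 0 < c ∧
      ∀ v ∈ G.neighborFinset u, x v u * w v = c * (x u v * w u) := by
    intro u
    obtain ⟨i, hui⟩ := hlevel_ex u
    have hapos : 0 < wsum w (C i) / wsum w (B i) := div_pos (hwCpos i) (hwBpos i)
    by_cases huB : u ∈ B i
    · by_cases huC : u ∈ C i
      · have h1 : wsum w (C i) / wsum w (B i) = 1 :=
          hBCeq i ⟨u, Finset.mem_inter.2 ⟨huB, huC⟩⟩
        refine ⟨1, one_pos, ?_⟩
        intro v hv
        have hadj : G.Adj u v := (SimpleGraph.mem_neighborFinset G u v).1 hv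
        by_cases hvC : v ∈ C i
        · have := hrel i u huB v hvC hadj
          rw [h1] at this
          exact this
        · by_cases hvB : v ∈ B i
          · have hthis := hrel i v hvB u huC hadj.symm
            rw [h1, one_mul] at hthis
            rw [one_mul, hthis]
          · have e1 : x u v = 0 := hxu0 u v i hui (fun _ => hvC) (fun _ => hvB)
            have e2 : x v u = 0 := hxv0 u v i hui (fun _ => hvB) (fun _ => hvC)
            rw [e1, e2]; ring
      · refine ⟨wsum w (C i) / wsum w (B i), hapos, ?_⟩
        intro v hv
        have hadj : G.Adj u v := (SimpleGraph.mem_neighborFinset G u v).1 hv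
        by_cases hvC : v ∈ C i
        · exact hrel i u huB v hvC hadj
        · have e1 : x u v = 0 := hxu0 u v i hui (fun _ => hvC) (fun hc => absurd hc huC)
          have e2 : x v u = 0 := hxv0 u v i hui (fun hc => absurd hc huC) (fun _ => hvC)
          rw [e1, e2]; ring
    · have huC : u ∈ C i := by
        rcases Finset.mem_union.1 hui with h | h
        · exact absurd h huB
        · exact h
      refine ⟨(wsum w (C i) / wsum w (B i))⁻¹, inv_pos.2 hapos, ?_⟩
      intro v hv
      have hadj : G.Adj u v := (SimpleGraph.mem_neighborFinset G u v).1 hv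
      by_cases hvB : v ∈ B i
      · have h := hrel i v hvB u huC hadj.symm
        rw [h, ← mul_assoc, inv_mul_cancel₀ (ne_of_gt hapos), one_mul]
      · have e1 : x u v = 0 := hxu0 u v i hui (fun hb => absurd hb huB) (fun _ => hvB)
        have e2 : x v u = 0 := hxv0 u v i hui (fun _ => hvB) (fun hb => absurd hb huB)
        rw [e1, e2]; ring
  have main : ∀ u : V, ∃ c : ℝ, 0 < c ∧ util G w x u = c * w u ∧
      ∀ v ∈ G.neighborFinset u, x v u * w v = c * (x u v * w u) := by
    intro u
    obtain ⟨c, hc, hkey⟩ := key u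
    refine ⟨c, hc, ?_, hkey⟩
    have h1 : util G w x u = ∑ v ∈ G.neighborFinset u, c * w u * x u v := by
      unfold util
      refine Finset.sum_congr rfl fun v hv => ?_
      rw [hkey v hv]; ring
    rw [h1, ← Finset.mul_sum, hxsum u, mul_one]
  constructor
  · intro u
    obtain ⟨c, hc, hU, _⟩ := main u
    rw [hU]
    exact mul_pos hc (hw u)
  · intro u v hv
    obtain ⟨c, hc, hU, hkey⟩ := main u
    rw [hkey v hv, hU]
    have h1 : c * w u ≠ 0 := ne_of_gt (mul_pos hc (hw u))
    rw [eq_div_iff h1]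
    ring
end
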